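/- arXiv:2204.10252 — 8 statements merged into one kernel-verified Lean document; each statement's English description precedes it below -/
import Mathlib

section
/- Let E = EuclideanSpace ℂ (Fin n) and F = EuclideanSpace ℂ (Fin m), let A : E →L[ℂ] F with adjoint A† = ContinuousLinearMap.adjoint A, let b ∈ F, let g : E → ℝ be convex with respect to the real scalar structure on E, let p : Polynomial ℝ, and let P = p(A† ∘L A) be the operator obtained by evaluating p (with coefficients mapped into ℂ) at A† ∘L A via Polynomial.aeval in the ℂ-algebra of continuous linear endomorphisms of E. Suppose y⋆ ∈ E satisfies the preconditioned fixed-point property, i.e. y⋆ minimizes z ↦ (1/2)‖z − (y⋆ − P (A† (A y⋆ − b)))‖² + g z over E, and suppose that for some ŷ ∈ E the point y⁺ minimizes z ↦ (1/2)‖z − (ŷ − P (A† (A ŷ − b)))‖² + g z over E. Then ‖y⁺ − y⋆‖ ≤ ‖(ContinuousLinearMap.id − P ∘L (A† ∘L A)) (ŷ − y⋆)‖. (Error bound for polynomial-preconditioned proximal gradient descent, Theorem 2.9.) -/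
open scoped RealInnerProductSpace

lemma prox_var_ineq {E : Type*} [NormedAddCommGroup E] [InnerProductSpace ℝ E]
    (g : E → ℝ) (hg : ConvexOn ℝ Set.univ g) (v u : E)
    (hmin : ∀ z, (1/2 : ℝ) * ‖u - v‖^2 + g u ≤ (1/2) * ‖z - v‖^2 + g z)
    (z : E) : 0 ≤ ⟪u - v, z - u⟫ + (g z - g u) := by
  have key : ∀ t : ℝ, 0 < t → t ≤ 1 →
      0 ≤ ⟪u - v, z - u⟫ + (g z - g u) + t / 2 * ‖z - u‖ ^ 2 := by
    intro t ht ht1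
    have hw := hmin ((1 - t) • u + t • z)
    have hconv := hg.2 (Set.mem_univ u) (Set.mem_univ z)
      (by linarith : (0:ℝ) ≤ 1 - t) ht.le (by ring)
    have hxv : (1 - t) • u + t • z - v = (u - v) + t • (z - u) := by
      rw [sub_smul, one_smul, smul_sub]; abel
    have hnorm : ‖(1 - t) • u + t • z - v‖ ^ 2
        = ‖u - v‖ ^ 2 + 2 * t * ⟪u - v, z - u⟫ + t ^ 2 * ‖z - u‖ ^ 2 := by
      rw [hxv, norm_add_sq_real, real_inner_smul_right, norm_smul]
      simp [mul_pow, abs_of_pos ht]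
      ring
    rw [hnorm] at hw
    simp only [smul_eq_mul] at hconv
    have hmul : t * 0 ≤ t * (⟪u - v, z - u⟫ + (g z - g u) + t / 2 * ‖z - u‖ ^ 2) := by
      nlinarith
    exact le_of_mul_le_mul_left hmul ht
  refine le_of_forall_pos_le_add ?_
  intro ε hε
  set N := ‖z - u‖ ^ 2 with hN
  have hN0 : 0 ≤ N := sq_nonneg _
  set t := min 1 (ε / (N + 1)) with htdef
  have ht0 : 0 < t := lt_min one_pos (div_pos hε (by linarith))
  have ht1 : t ≤ 1 := min_le_left _ _
  have hkey := key t ht0 ht1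
  have htle : t ≤ ε / (N + 1) := min_le_right _ _
  have : t / 2 * N ≤ ε := by
    have h1 : t * N ≤ (ε / (N + 1)) * (N + 1) := by
      apply mul_le_mul htle (by linarith) hN0 (le_of_lt (div_pos hε (by linarith)))
    rw [div_mul_cancel₀ ε (by linarith : N + 1 ≠ 0)] at h1
    linarith
  linarith

lemma prox_nonexpansive {E : Type*} [NormedAddCommGroup E] [InnerProductSpace ℝ E]
    (g : E → ℝ) (hg : ConvexOn ℝ Set.univ g) (v₁ v₂ u₁ u₂ : E)
    (h₁ : ∀ z, (1/2 : ℝ) * ‖u₁ - v₁‖^2 + g u₁ ≤ (1/2) * ‖z - v₁‖^2 + g z)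
    (h₂ : ∀ z, (1/2 : ℝ) * ‖u₂ - v₂‖^2 + g u₂ ≤ (1/2) * ‖z - v₂‖^2 + g z) :
    ‖u₂ - u₁‖ ≤ ‖v₂ - v₁‖ := by
  have hv1 := prox_var_ineq g hg v₁ u₁ h₁ u₂
  have hv2 := prox_var_ineq g hg v₂ u₂ h₂ u₁
  set d := u₂ - u₁ with hd
  have e1 : ⟪u₂ - v₂, u₁ - u₂⟫ = -⟪u₂ - v₂, d⟫ := by
    rw [← inner_neg_right]; congr 1; simp [hd]
  rw [e1] at hv2
  have expand : ⟪v₂ - v₁, d⟫ = ⟪d, d⟫ - ⟪u₂ - v₂, d⟫ + ⟪u₁ - v₁, d⟫ := by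
    rw [← inner_sub_left, ← inner_add_left]; congr 1; simp only [hd]; abel
  have hsq : ‖d‖ ^ 2 ≤ ⟪v₂ - v₁, d⟫ := by
    have := real_inner_self_eq_norm_sq d
    linarith [expand, hv1, hv2, this.symm]
  have hcs : ⟪v₂ - v₁, d⟫ ≤ ‖v₂ - v₁‖ * ‖d‖ := real_inner_le_norm _ _
  rcases eq_or_lt_of_le (norm_nonneg d) with h0 | h0
  · rw [← h0]; exact norm_nonneg _
  · have : ‖d‖ * ‖d‖ ≤ ‖v₂ - v₁‖ * ‖d‖ := by nlinarith
    exact le_of_mul_le_mul_right this h0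

/-- Error contraction bound for polynomial-preconditioned proximal gradient descent
(Theorem 2.9). -/
theorem polynomial_preconditioned_pgd_error_bound (n m : ℕ)
    (A : EuclideanSpace ℂ (Fin n) →L[ℂ] EuclideanSpace ℂ (Fin m))
    (b : EuclideanSpace ℂ (Fin m))
    (g : EuclideanSpace ℂ (Fin n) → ℝ) (hg : ConvexOn ℝ Set.univ g)
    (p : Polynomial ℝ)
    (P : EuclideanSpace ℂ (Fin n) →L[ℂ] EuclideanSpace ℂ (Fin n))
    (hP : P = Polynomial.aeval
      ((ContinuousLinearMap.adjoint A).comp A) (p.map (algebraMap ℝ ℂ)))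
    (ystar yhat yplus : EuclideanSpace ℂ (Fin n))
    (hstar : ∀ z : EuclideanSpace ℂ (Fin n),
      (1/2) * ‖ystar - (ystar - P ((ContinuousLinearMap.adjoint A) (A ystar - b)))‖^2
          + g ystar ≤
      (1/2) * ‖z - (ystar - P ((ContinuousLinearMap.adjoint A) (A ystar - b)))‖^2 + g z)
    (hplus : ∀ z : EuclideanSpace ℂ (Fin n),
      (1/2) * ‖yplus - (yhat - P ((ContinuousLinearMap.adjoint A) (A yhat - b)))‖^2
          + g yplus ≤
      (1/2) * ‖z - (yhat - P ((ContinuousLinearMap.adjoint A) (A yhat - b)))‖^2 + g z) :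
    ‖yplus - ystar‖ ≤
      ‖(ContinuousLinearMap.id ℂ (EuclideanSpace ℂ (Fin n))
        - P.comp ((ContinuousLinearMap.adjoint A).comp A)) (yhat - ystar)‖ := by
  have hmain := prox_nonexpansive g hg
    (ystar - P ((ContinuousLinearMap.adjoint A) (A ystar - b)))
    (yhat - P ((ContinuousLinearMap.adjoint A) (A yhat - b)))
    ystar yplus hstar hplus
  have heq : (yhat - P ((ContinuousLinearMap.adjoint A) (A yhat - b)))
      - (ystar - P ((ContinuousLinearMap.adjoint A) (A ystar - b)))
      = (ContinuousLinearMap.id ℂ (EuclideanSpace ℂ (Fin n))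
        - P.comp ((ContinuousLinearMap.adjoint A).comp A)) (yhat - ystar) := by
    simp only [ContinuousLinearMap.sub_apply, ContinuousLinearMap.coe_comp',
      Function.comp_apply, ContinuousLinearMap.id_apply, map_sub]
    abel
  rw [heq] at hmain
  exact hmain
end

section
/- Fix d : ℕ. Suppose p : Polynomial ℝ with p.natDegree ≤ d minimizes the cost q ↦ ∫ z in (0:ℝ)..1, (1 − q.eval z * z)² among all real polynomials of degree at most d; that is, for every q : Polynomial ℝ with q.natDegree ≤ d one has ∫ z in (0:ℝ)..1, (1 − p.eval z * z)² dz ≤ ∫ z in (0:ℝ)..1, (1 − q.eval z * z)² dz. Then p.eval z > 0 for every z ∈ (0, 1]. (Polynomial positivity, Theorem 2.10.) -/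
open Polynomial MeasureTheory Set

noncomputable def II (P : Polynomial ℝ) : ℝ := ∫ z in (0:ℝ)..1, P.eval z

lemma pii (P : Polynomial ℝ) (a b : ℝ) : IntervalIntegrable (fun z => P.eval z) volume a b :=
  P.continuous.intervalIntegrable a b

lemma II_add (P Q : Polynomial ℝ) : II (P + Q) = II P + II Q := by
  simp only [II, eval_add]
  exact intervalIntegral.integral_add (pii P 0 1) (pii Q 0 1)

lemma II_smul (c : ℝ) (P : Polynomial ℝ) : II (C c * P) = c * II P := by
  simp only [II, eval_mul, eval_C]
  exact intervalIntegral.integral_const_mul c _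

lemma II_sub (P Q : Polynomial ℝ) : II (P - Q) = II P - II Q := by
  simp only [II, eval_sub]
  exact intervalIntegral.integral_sub (pii P 0 1) (pii Q 0 1)

lemma II_nonneg (P : Polynomial ℝ) (h : ∀ z ∈ Icc (0:ℝ) 1, 0 ≤ P.eval z) : 0 ≤ II P :=
  intervalIntegral.integral_nonneg (by norm_num) h

lemma integral_pos_of_cont {f : ℝ → ℝ} (hf : Continuous f) {a b : ℝ} (hab : a < b)
    (h0 : ∀ x ∈ Icc a b, 0 ≤ f x) {x₀ : ℝ} (hx₀ : x₀ ∈ Icc a b) (hp : 0 < f x₀) :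
    0 < ∫ z in a..b, f z := by
  obtain ⟨δ, hδ, hball⟩ := Metric.continuousAt_iff.mp hf.continuousAt (f x₀ / 2) (by linarith)
  obtain ⟨hax, hxb⟩ := hx₀
  set a' := max a (x₀ - δ/2) with ha'
  set b' := min b (x₀ + δ/2) with hb'
  have haa' : a ≤ a' := le_max_left _ _
  have hb'b : b' ≤ b := min_le_left _ _
  have ha'b' : a' < b' := by
    rw [ha', hb']
    apply max_lt <;> apply lt_min <;> linarith
  have hsub : ∀ y ∈ Icc a' b', f x₀ / 2 ≤ f y := by
    intro y hy
    obtain ⟨h1, h2⟩ := hy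
    rw [ha'] at h1; rw [hb'] at h2
    have hy1 : x₀ - δ/2 ≤ y := le_trans (le_max_right _ _) h1
    have hy2 : y ≤ x₀ + δ/2 := le_trans h2 (min_le_right _ _)
    have hdist : dist y x₀ < δ := by
      rw [Real.dist_eq, abs_lt]; constructor <;> linarith
    have := hball hdist
    rw [Real.dist_eq, abs_lt] at this
    linarith [this.1]
  have hint : ∀ u v : ℝ, IntervalIntegrable f volume u v := fun u v => hf.intervalIntegrable u v
  have hsplit : (∫ z in a..b, f z) =
      (∫ z in a..a', f z) + ((∫ z in a'..b', f z) + (∫ z in b'..b, f z)) := by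
    rw [intervalIntegral.integral_add_adjacent_intervals (hint a' b') (hint b' b),
      intervalIntegral.integral_add_adjacent_intervals (hint a a') (hint a' b)]
  have h1 : 0 ≤ ∫ z in a..a', f z := by
    apply intervalIntegral.integral_nonneg haa'
    intro u hu; exact h0 u ⟨hu.1, le_trans hu.2 (le_trans ha'b'.le hb'b)⟩
  have h3 : 0 ≤ ∫ z in b'..b, f z := by
    apply intervalIntegral.integral_nonneg hb'b
    intro u hu; exact h0 u ⟨le_trans (le_trans haa' ha'b'.le) hu.1, hu.2⟩
  have h2 : (b' - a') * (f x₀ / 2) ≤ ∫ z in a'..b', f z := by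
    have := intervalIntegral.integral_mono_on (μ := volume) ha'b'.le
      (intervalIntegrable_const (c := f x₀ / 2)) (hint a' b') hsub
    rw [intervalIntegral.integral_const] at this
    simpa [smul_eq_mul] using this
  have : 0 < (b' - a') * (f x₀ / 2) := by
    apply mul_pos (by linarith) (by linarith)
  linarith [hsplit, this, h1, h2, h3]

lemma eval_zero_of_cont {f : ℝ → ℝ} (hf : Continuous f) {a b : ℝ} (hab : a < b)
    (h0 : ∀ x ∈ Icc a b, 0 ≤ f x) (hI : (∫ z in a..b, f z) = 0) :
    ∀ x ∈ Icc a b, f x = 0 := by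
  intro x hx
  by_contra hne
  have hp : 0 < f x := lt_of_le_of_ne (h0 x hx) (Ne.symm hne)
  have := integral_pos_of_cont hf hab h0 hx hp
  rw [hI] at this; exact lt_irrefl 0 this

lemma cost_eq (q : Polynomial ℝ) :
    (∫ z in (0:ℝ)..1, (1 - q.eval z * z)^2) = II ((1 - X * q)^2) := by
  unfold II
  congr 1
  funext z
  simp only [eval_pow, eval_sub, eval_one, eval_mul, eval_X]
  ring

lemma ortho (d : ℕ) (p : Polynomial ℝ) (hdeg : p.natDegree ≤ d)
    (hmin : ∀ q : Polynomial ℝ, q.natDegree ≤ d →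
      (∫ z in (0:ℝ)..1, (1 - p.eval z * z)^2) ≤ ∫ z in (0:ℝ)..1, (1 - q.eval z * z)^2)
    (q : Polynomial ℝ) (hq : q.natDegree ≤ d) :
    II ((1 - X * p) * (X * q)) = 0 := by
  set A := II ((1 - X * p) * (X * q)) with hA
  set B := II ((X * q)^2) with hBdef
  have key : ∀ t : ℝ, 0 ≤ t^2 * B - 2 * t * A := by
    intro t
    have hdeg' : (p + C t * q).natDegree ≤ d :=
      (natDegree_add_le _ _).trans (max_le hdeg ((natDegree_C_mul_le t q).trans hq))
    have h1 := hmin (p + C t * q) hdeg'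
    rw [cost_eq, cost_eq] at h1
    have hP : (1 - X * (p + C t * q))^2 =
        (1 - X * p)^2 + (C (-2*t) * ((1 - X * p) * (X * q)) + C (t^2) * ((X * q)^2)) := by
      have e1 : (C (-2*t) : Polynomial ℝ) = -2 * C t := by
        simp [map_mul, map_neg, map_ofNat]
      have e2 : (C (t^2) : Polynomial ℝ) = C t * C t := by
        rw [← map_mul]; ring_nf
      rw [e1, e2]; ring
    rw [hP, II_add, II_add, II_smul, II_smul] at h1
    nlinarith [h1]
  have hB : 0 ≤ B := by
    apply II_nonneg
    intro z hz
    simp only [eval_pow]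
    positivity
  by_contra hA0
  have h := key (A / (B + 1))
  have hden : (0:ℝ) < B + 1 := by linarith
  have hA2 : 0 < A^2 := by positivity
  rw [div_pow] at h
  have h2 : (A^2 / (B+1)^2) * B - 2 * (A/(B+1)) * A = A^2 * (B - 2*(B+1)) / (B+1)^2 := by
    field_simp
  rw [h2] at h
  have hneg : A ^ 2 * (B - 2 * (B + 1)) < 0 := by nlinarith
  have := div_neg_of_neg_of_pos hneg (by positivity : (0:ℝ) < (B+1)^2)
  linarith

-- squared norm is positive
lemma II_sq_pos (P : Polynomial ℝ) {x₀ : ℝ} (hx₀ : x₀ ∈ Icc (0:ℝ) 1) (hp : P.eval x₀ ≠ 0) :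
    0 < II (P^2) := by
  unfold II
  apply integral_pos_of_cont (f := fun z => (P^2).eval z) (P^2).continuous (by norm_num)
    (fun x _ => by simp only [eval_pow]; positivity) hx₀
  simp only [eval_pow]
  positivity

section Min
variable (d : ℕ) (p : Polynomial ℝ) (hdeg : p.natDegree ≤ d)
  (hmin : ∀ q : Polynomial ℝ, q.natDegree ≤ d →
      (∫ z in (0:ℝ)..1, (1 - p.eval z * z)^2) ≤ ∫ z in (0:ℝ)..1, (1 - q.eval z * z)^2)

include hdeg hmin

lemma II_F_eq : II (1 - X * p) = II ((1 - X * p)^2) := by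
  have h := ortho d p hdeg hmin p hdeg
  have hP : (1 - X * p)^2 = (1 - X * p) - (1 - X * p) * (X * p) := by ring
  rw [hP, II_sub (1 - X * p) ((1 - X * p) * (X * p)), h, sub_zero]

lemma II_F_pos : 0 < II ((1 - X * p)^2) := by
  apply II_sq_pos (1 - X * p) (x₀ := 0) (by norm_num)
  simp

lemma endpoint : (Polynomial.eval 1 (1 - X * p))^2 < 1 := by
  set Fp := (1 : Polynomial ℝ) - X * p with hFp
  set ε := Polynomial.eval 1 Fp with hε
  by_cases hε0 : ε = 0
  · rw [hε0]; norm_num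
  set G := Fp.comp (1 - X) * C ε⁻¹ with hG
  have hG0 : G.eval 0 = 1 := by
    simp only [hG, eval_mul, eval_C, eval_comp, eval_sub, eval_one, eval_X, sub_zero]
    exact mul_inv_cancel₀ hε0
  have hdvd : X ∣ (1 - G) := by
    have hc : G.coeff 0 = 1 := by rw [coeff_zero_eq_eval_zero, hG0]
    rw [X_dvd_iff]
    simp [hc]
  obtain ⟨qt, hqt⟩ := hdvd
  have hGq : G = 1 - X * qt := by rw [← hqt]; ring
  -- degree bound
  have hFpdeg : Fp.natDegree ≤ d + 1 := by
    refine (natDegree_sub_le _ _).trans ?_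
    simp only [natDegree_one]
    refine max_le (by omega) ?_
    refine (natDegree_mul_le).trans ?_
    simp only [natDegree_X]
    omega
  have hqtdeg : qt.natDegree ≤ d := by
    rcases eq_or_ne qt 0 with h0 | h0
    · simp [h0]
    · have h1 : (X * qt).natDegree = 1 + qt.natDegree := by
        rw [natDegree_mul X_ne_zero h0, natDegree_X]
      have h2 : (1 - G).natDegree ≤ d + 1 := by
        refine (natDegree_sub_le _ _).trans ?_
        simp only [natDegree_one]
        refine max_le (by omega) ?_
        rw [hG]
        refine (natDegree_mul_le).trans ?_
        have : (Fp.comp (1 - X)).natDegree = Fp.natDegree * (1 - X : Polynomial ℝ).natDegree := natDegree_comp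
        have hX1 : (1 - X : Polynomial ℝ).natDegree = 1 := by
          compute_degree!
        rw [natDegree_C, this, hX1]
        omega
      rw [hqt, h1] at h2
      omega
  -- cost computation
  have hcost : (∫ z in (0:ℝ)..1, (1 - qt.eval z * z)^2)
      = ε⁻¹^2 * ∫ z in (0:ℝ)..1, (1 - p.eval z * z)^2 := by
    have hptw : ∀ z : ℝ, (1 - qt.eval z * z)^2 = ε⁻¹^2 * (fun u => (Fp.eval u)^2) (1 - z) := by
      intro z
      have : (1:ℝ) - qt.eval z * z = G.eval z := by
        rw [hGq]; simp only [eval_sub, eval_one, eval_mul, eval_X]; ring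
      rw [this, hG]
      simp only [eval_mul, eval_C, eval_comp, eval_sub, eval_one, eval_X]
      ring
    have h2 : (∫ z in (0:ℝ)..1, (1 - qt.eval z * z)^2)
        = ∫ z in (0:ℝ)..1, ε⁻¹^2 * (fun u => (Fp.eval u)^2) (1 - z) := by
      congr 1; funext z; exact hptw z
    rw [h2, intervalIntegral.integral_const_mul]
    congr 1
    have hcs := intervalIntegral.integral_comp_sub_left (a := (0:ℝ)) (b := 1)
      (fun u => (Fp.eval u)^2) 1
    rw [show (1:ℝ) - 1 = 0 from by norm_num, show (1:ℝ) - 0 = 1 from by norm_num] at hcs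
    rw [hcs]
    congr 1
    funext z
    simp only [hFp, eval_sub, eval_one, eval_mul, eval_X]
    ring
  -- minimum value is positive
  have hS' : (∫ z in (0:ℝ)..1, (1 - p.eval z * z)^2) = II ((1 - X * p)^2) := cost_eq p
  have hS : 0 < ∫ z in (0:ℝ)..1, (1 - p.eval z * z)^2 := by
    rw [hS']; exact II_F_pos d p hdeg hmin
  have h1 := hmin qt hqtdeg
  rw [hcost] at h1
  have hε2pos : 0 < ε^2 := by positivity
  have hinv : 1 ≤ ε⁻¹^2 := by nlinarith [h1, hS]
  have hε2 : ε^2 ≤ 1 := by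
    rw [inv_pow] at hinv
    nlinarith [mul_inv_cancel₀ (ne_of_gt hε2pos), hinv, hε2pos]
  rcases lt_or_eq_of_le hε2 with hlt | heq
  · exact hlt
  exfalso
  -- equality case: qt is also a minimizer
  have hinv1 : ε⁻¹^2 = 1 := by
    rw [inv_pow, heq, inv_one]
  have hmin' : ∀ r : Polynomial ℝ, r.natDegree ≤ d →
      (∫ z in (0:ℝ)..1, (1 - qt.eval z * z)^2) ≤ ∫ z in (0:ℝ)..1, (1 - r.eval z * z)^2 := by
    intro r hr
    rw [hcost, hinv1, one_mul]
    exact hmin r hr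
  have hoq := ortho d qt hqtdeg hmin' 1 (by simp)
  -- compute ∫ Fp(1-z) * z two ways
  have hkey : (∫ z in (0:ℝ)..1, Fp.eval (1-z) * z) = 0 := by
    have hptw2 : ∀ z : ℝ, Fp.eval (1-z) * z = ε * (((1 - X * qt) * (X * 1)).eval z) := by
      intro z
      have hGz : G.eval z = Fp.eval (1-z) * ε⁻¹ := by
        simp only [hG, eval_mul, eval_C, eval_comp, eval_sub, eval_one, eval_X]
      have : ((1 - X * qt) * (X * 1)).eval z = G.eval z * z := by
        rw [hGq]; simp only [eval_mul, eval_sub, eval_one, eval_X, mul_one]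
      rw [this, hGz]
      field_simp
    have h2 : (∫ z in (0:ℝ)..1, Fp.eval (1-z) * z)
        = ∫ z in (0:ℝ)..1, ε * (((1 - X * qt) * (X * 1)).eval z) := by
      congr 1; funext z; exact hptw2 z
    rw [h2, intervalIntegral.integral_const_mul]
    have : (∫ z in (0:ℝ)..1, ((1 - X * qt) * (X * 1)).eval z) = II ((1 - X * qt) * (X * 1)) := rfl
    rw [this, hoq, mul_zero]
  have hkey2 : (∫ z in (0:ℝ)..1, Fp.eval (1-z) * z) = II Fp := by
    have hcs := intervalIntegral.integral_comp_sub_left (a := (0:ℝ)) (b := 1)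
      (fun u => Fp.eval u * (1 - u)) 1
    rw [show (1:ℝ) - 1 = 0 from by norm_num, show (1:ℝ) - 0 = 1 from by norm_num] at hcs
    have hl : (∫ z in (0:ℝ)..1, Fp.eval (1-z) * z)
        = ∫ z in (0:ℝ)..1, (fun u => Fp.eval u * (1 - u)) (1 - z) := by
      congr 1; funext z; simp only; ring_nf
    rw [hl, hcs]
    have hr : (∫ z in (0:ℝ)..1, Fp.eval z * (1 - z)) = II (Fp * (1 - X)) := by
      unfold II
      congr 1; funext z
      simp only [eval_mul, eval_sub, eval_one, eval_X]
    rw [hr]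
    have : Fp * (1 - X) = Fp - (1 - X * p) * (X * 1) := by rw [hFp]; ring
    rw [this, II_sub, ortho d p hdeg hmin 1 (by simp), sub_zero]
  have hFpos : 0 < II Fp := by
    have hFeq := II_F_eq d p hdeg hmin
    have h2 := II_F_pos d p hdeg hmin
    rw [hFp]
    linarith [hFeq, h2]
  rw [hkey2] at hkey
  linarith
end Min

lemma vdeg_le (F : Polynomial ℝ) {m : ℕ} (hmdef : F.natDegree = m) (hm : 1 ≤ m) :
    (derivative (derivative F) * X ^ 1 - derivative (derivative F) * X ^ 2
      + derivative F * C 2 - derivative F * X ^ 1 * C 3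
      + F * C ((m : ℝ) * ((m : ℝ) + 2))).natDegree ≤ m - 1 := by
  rw [natDegree_le_iff_coeff_eq_zero]
  intro N hN
  have hNm : m ≤ N := by omega
  have h1N : 1 ≤ N := by omega
  have hc1 : F.coeff (N+1) = 0 := coeff_eq_zero_of_natDegree_lt (by omega)
  simp only [coeff_add, coeff_sub, coeff_mul_C, coeff_mul_X_pow', coeff_derivative]
  rw [if_pos (by omega : 1 ≤ N)]
  have e1 : N - 1 + 1 = N := by omega
  rcases lt_or_eq_of_le hNm with hLt | hEq
  · -- N > m : everything vanishes
    have h2N : 2 ≤ N := by omega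
    rw [if_pos (by omega : 2 ≤ N)]
    have e2 : N - 2 + 1 = N - 1 := by omega
    have hcN : F.coeff N = 0 := coeff_eq_zero_of_natDegree_lt (by omega)
    have hcN1 : F.coeff (N - 1 + 1) = 0 := by rw [e1]; exact hcN
    simp only [coeff_derivative, e1, e2, hc1, hcN, hcN1, zero_mul, mul_zero, sub_zero,
      zero_sub, add_zero, zero_add, neg_zero, ite_self]
  · -- N = m
    subst hEq
    rcases eq_or_lt_of_le hm with hm1 | hm2
    · -- m = 1
      have hN1 : m = 1 := by omega
      subst hN1
      simp only [coeff_derivative, hc1, zero_mul, mul_zero, sub_zero, zero_sub, add_zero,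
        zero_add, neg_zero, Nat.sub_self, if_pos (le_refl 1)]
      push_cast
      ring
    · -- m ≥ 2
      have h2N : 2 ≤ m := by omega
      rw [if_pos h2N]
      have e2 : m - 2 + 1 = m - 1 := by omega
      simp only [coeff_derivative, e1, e2, hc1, zero_mul, mul_zero, sub_zero, zero_sub,
        add_zero, zero_add, neg_zero, if_pos h1N]
      have c1 : ((m - 1 : ℕ) : ℝ) = (m : ℝ) - 1 := by
        push_cast [Nat.cast_sub (by omega : 1 ≤ m)]; ring
      have c2 : ((m - 2 : ℕ) : ℝ) = (m : ℝ) - 2 := by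
        push_cast [Nat.cast_sub (by omega : 2 ≤ m)]; ring
      rw [c1, c2]
      ring

lemma II_by_parts (A B : Polynomial ℝ) :
    II (derivative A * B) =
      A.eval 1 * B.eval 1 - A.eval 0 * B.eval 0 - II (A * derivative B) := by
  have h := intervalIntegral.integral_deriv_mul_eq_sub (a := (0:ℝ)) (b := 1)
    (u := fun x => A.eval x) (v := fun x => B.eval x)
    (u' := fun x => (derivative A).eval x) (v' := fun x => (derivative B).eval x)
    (fun x _ => A.hasDerivAt x) (fun x _ => B.hasDerivAt x) (pii _ 0 1) (pii _ 0 1)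
  have h2 : (∫ x in (0:ℝ)..1,
      ((derivative A).eval x * B.eval x + A.eval x * (derivative B).eval x))
      = II (derivative A * B + A * derivative B) := by
    unfold II
    congr 1; funext x
    simp only [eval_add, eval_mul]
  rw [h2] at h
  rw [II_add] at h
  linarith

lemma Ddeg {k : ℕ} (h : Polynomial ℝ) (hd : h.natDegree ≤ k) :
    ((2 - 3*X) * derivative h + (X - X^2) * derivative (derivative h)).natDegree ≤ k := by
  rcases Nat.eq_zero_or_pos h.natDegree with h0 | h1
  · have : h = C (h.coeff 0) := eq_C_of_natDegree_le_zero (by omega)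
    rw [this]
    simp
  · refine (natDegree_add_le _ _).trans (max_le ?_ ?_)
    · refine (natDegree_mul_le).trans ?_
      have d1 : (2 - 3*X : Polynomial ℝ).natDegree ≤ 1 := by compute_degree
      have d2 : (derivative h).natDegree ≤ h.natDegree - 1 := natDegree_derivative_le h
      omega
    · rcases Nat.lt_or_ge h.natDegree 2 with h2 | h2
      · have hd1 : (derivative h).natDegree = 0 := by
          have := natDegree_derivative_le h
          omega
        have : derivative h = C ((derivative h).coeff 0) := eq_C_of_natDegree_le_zero (by omega)
        rw [this]
        simp
      · refine (natDegree_mul_le).trans ?_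
        have d1 : (X - X^2 : Polynomial ℝ).natDegree ≤ 2 := by compute_degree
        have d2 : (derivative (derivative h)).natDegree ≤ h.natDegree - 2 := by
          have u1 := natDegree_derivative_le h
          have u2 := natDegree_derivative_le (derivative h)
          omega
        omega

set_option maxHeartbeats 2000000 in
/-- Polynomial positivity (Theorem 2.10): the degree-`d` minimizer of the design cost
`q ↦ ∫ z in (0,1), (1 - q(z)·z)²` is strictly positive on `(0, 1]`. -/
theorem optimal_polynomial_positivity (d : ℕ) (p : Polynomial ℝ)
    (hdeg : p.natDegree ≤ d)
    (hmin : ∀ q : Polynomial ℝ, q.natDegree ≤ d →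
      (∫ z in (0:ℝ)..1, (1 - p.eval z * z)^2) ≤ ∫ z in (0:ℝ)..1, (1 - q.eval z * z)^2) :
    ∀ z ∈ Set.Ioc (0:ℝ) 1, 0 < p.eval z := by
  intro z hz
  obtain ⟨hz0, hz1⟩ := hz
  obtain ⟨Fp, hFp⟩ : ∃ F : Polynomial ℝ, F = 1 - X * p := ⟨_, rfl⟩
  have horth : ∀ q : Polynomial ℝ, q.natDegree ≤ d → II (Fp * (X * q)) = 0 := by
    intro q hq
    rw [hFp]; exact ortho d p hdeg hmin q hq
  have hFpdeg : Fp.natDegree ≤ d + 1 := by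
    rw [hFp]
    refine (natDegree_sub_le _ _).trans ?_
    simp only [natDegree_one]
    refine max_le (by omega) ?_
    refine (natDegree_mul_le).trans ?_
    simp only [natDegree_X]
    omega
  obtain ⟨m, hm⟩ : ∃ m, Fp.natDegree = m := ⟨_, rfl⟩
  rw [hm] at hFpdeg
  -- m ≥ 1
  have hm1 : 1 ≤ m := by
    by_contra hcon
    have hFc : Fp = C (Fp.coeff 0) := eq_C_of_natDegree_le_zero (by rw [hm]; omega)
    have h00 : Fp.coeff 0 = 1 := by
      rw [coeff_zero_eq_eval_zero, hFp]; simp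
    have h1 := horth 1 (by simp)
    rw [hFc, h00] at h1
    have h2 : II (C (1:ℝ) * (X * 1)) = 1/2 := by
      unfold II
      simp only [eval_mul, eval_C, eval_X, eval_one, one_mul, mul_one]
      rw [integral_id]
      norm_num
    rw [h1] at h2
    norm_num at h2
  obtain ⟨lam, hlam⟩ : ∃ l : ℝ, l = (m:ℝ) * ((m:ℝ) + 2) := ⟨_, rfl⟩
  have hlam0 : 0 < lam := by
    have h2 : (1:ℝ) ≤ (m:ℝ) := by exact_mod_cast hm1
    rw [hlam]; nlinarith
  obtain ⟨v, hv⟩ : ∃ w : Polynomial ℝ, w = derivative (derivative Fp) * X ^ 1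
      - derivative (derivative Fp) * X ^ 2
      + derivative Fp * C 2 - derivative Fp * X ^ 1 * C 3 + Fp * C lam := ⟨_, rfl⟩
  have hvdeg : v.natDegree ≤ d := by
    have h2 := vdeg_le Fp hm hm1
    rw [hlam] at hv
    rw [← hv] at h2
    omega
  -- pairing identity
  have hpair : ∀ h : Polynomial ℝ, h.natDegree ≤ d → II (v * (X * h)) = 0 := by
    intro h hh
    obtain ⟨A1, hA1⟩ : ∃ w : Polynomial ℝ, w = (X^2 - X^3) * derivative Fp := ⟨_, rfl⟩
    obtain ⟨A2, hA2⟩ : ∃ w : Polynomial ℝ, w = (X^2 - X^3) * derivative h := ⟨_, rfl⟩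
    obtain ⟨D, hD⟩ : ∃ w : Polynomial ℝ,
      w = (2 - 3*X) * derivative h + (X - X^2) * derivative (derivative h) := ⟨_, rfl⟩
    have hDdeg : D.natDegree ≤ d := by rw [hD]; exact Ddeg h hh
    have hXv : v * (X * h) = derivative A1 * h + C lam * (Fp * (X * h)) := by
      rw [hv, hA1]
      simp only [derivative_mul, derivative_sub, derivative_X_pow, derivative_X,
        derivative_one, Nat.cast_ofNat, map_ofNat]
      norm_num
      ring
    have hA2' : derivative A2 * Fp = Fp * (X * D) := by
      rw [hA2, hD]
      simp only [derivative_mul, derivative_sub, derivative_X_pow, derivative_X,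
        derivative_one, Nat.cast_ofNat, map_ofNat]
      norm_num
      ring
    have hIBP1 := II_by_parts A1 h
    have hIBP2 := II_by_parts A2 Fp
    have b11 : A1.eval 1 = 0 := by rw [hA1]; simp
    have b10 : A1.eval 0 = 0 := by rw [hA1]; simp
    have b21 : A2.eval 1 = 0 := by rw [hA2]; simp
    have b20 : A2.eval 0 = 0 := by rw [hA2]; simp
    have hsym : A1 * derivative h = A2 * derivative Fp := by rw [hA1, hA2]; ring
    have h0 : II (derivative A2 * Fp) = 0 := by
      rw [hA2']
      exact horth D hDdeg
    rw [b11, b10] at hIBP1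
    rw [b21, b20, h0] at hIBP2
    have hA2dF : II (A2 * derivative Fp) = 0 := by linarith
    rw [hsym, hA2dF] at hIBP1
    rw [hXv, II_add, II_smul, horth h hh, hIBP1]
    ring
  -- v = 0
  have hv0 : v = 0 := by
    have h1 := hpair v hvdeg
    have h2 : v * (X * v) = X * v^2 := by ring
    rw [h2] at h1
    have h3 := eval_zero_of_cont (f := fun x => (X * v^2 : Polynomial ℝ).eval x)
      (X * v^2 : Polynomial ℝ).continuous (by norm_num : (0:ℝ) < 1)
      (fun x hx => by
        simp only [eval_mul, eval_pow, eval_X]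
        exact mul_nonneg hx.1 (sq_nonneg _)) h1
    have h4 : ∀ x ∈ Ioc (0:ℝ) 1, v.eval x = 0 := by
      intro x hx
      have := h3 x ⟨hx.1.le, hx.2⟩
      simp only [eval_mul, eval_pow, eval_X] at this
      have hx0 : x ≠ 0 := ne_of_gt hx.1
      have : (v.eval x)^2 = 0 := by
        rcases mul_eq_zero.mp this with h | h
        · exact absurd h hx0
        · exact h
      exact pow_eq_zero_iff (by norm_num) |>.mp this
    apply eq_zero_of_infinite_isRoot
    apply Set.Infinite.mono (s := Ioc (0:ℝ) 1)
    · intro x hx; exact h4 x hx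
    · exact Set.Ioc_infinite (by norm_num)
  -- the Sonin energy polynomial
  obtain ⟨Ep, hEp⟩ : ∃ w : Polynomial ℝ,
    w = C lam * Fp^2 + (X - X^2) * (derivative Fp)^2 := ⟨_, rfl⟩
  have hEpval0 : Ep.eval 0 = lam := by
    rw [hEp, hFp]; simp
  have hEpderiv : derivative Ep = (4*X - 3) * (derivative Fp)^2 := by
    have hstep : derivative Ep = (4*X - 3) * (derivative Fp)^2 + 2 * derivative Fp * v := by
      rw [hEp, hv]
      simp only [derivative_add, derivative_mul, derivative_sub, derivative_pow,
        derivative_X_pow, derivative_X, derivative_one, derivative_C, Nat.cast_ofNat,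
        map_ofNat]
      norm_num
      ring
    rw [hstep, hv0]
    ring
  have hFTC : ∀ a b : ℝ, (∫ s in a..b, (derivative Ep).eval s) = Ep.eval b - Ep.eval a := by
    intro a b
    exact intervalIntegral.integral_eq_sub_of_hasDerivAt
      (fun x _ => Ep.hasDerivAt x) (pii (derivative Ep) a b)
  have hEplb : ∀ s, 0 ≤ s → s ≤ 1 → lam * (Fp.eval s)^2 ≤ Ep.eval s := by
    intro s h0 h1
    rw [hEp]
    simp only [eval_add, eval_mul, eval_sub, eval_pow, eval_X, eval_C]
    nlinarith [sq_nonneg ((derivative Fp).eval s), mul_nonneg (mul_nonneg h0 (sub_nonneg.mpr h1))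
      (sq_nonneg ((derivative Fp).eval s))]
  have hend : (Fp.eval 1)^2 < 1 := by
    rw [hFp]; exact endpoint d p hdeg hmin
  have hEp1 : Ep.eval 1 = lam * (Fp.eval 1)^2 := by
    rw [hEp]; simp
  -- main case analysis
  have hFz : Fp.eval z < 1 := by
    rcases le_total z (3/4 : ℝ) with hcase | hcase
    · by_contra hge
      push_neg at hge
      have hIz := hFTC 0 z
      rw [hEpval0] at hIz
      have hEpz : lam ≤ Ep.eval z := by
        have hlb := hEplb z hz0.le hz1
        have hF2 : 1 ≤ (Fp.eval z)^2 := by nlinarith [hge]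
        nlinarith [mul_le_mul_of_nonneg_left hF2 hlam0.le]
      obtain ⟨W, hW⟩ : ∃ w : Polynomial ℝ, w = (3 - 4*X) * (derivative Fp)^2 := ⟨_, rfl⟩
      have hWeval : ∀ s : ℝ, W.eval s = (3 - 4*s) * ((derivative Fp).eval s)^2 := by
        intro s
        rw [hW]
        simp [eval_mul, eval_sub, eval_pow, eval_X, eval_ofNat]
      have hWnn : ∀ x ∈ Icc (0:ℝ) z, 0 ≤ W.eval x := by
        intro x hx
        rw [hWeval]
        exact mul_nonneg (by nlinarith [hx.2, hcase]) (sq_nonneg _)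
      have hWint : (∫ s in (0:ℝ)..z, W.eval s) = -(∫ s in (0:ℝ)..z, (derivative Ep).eval s) := by
        rw [← intervalIntegral.integral_neg]
        congr 1
        funext s
        rw [hWeval, hEpderiv]
        simp only [eval_mul, eval_sub, eval_pow, eval_X, eval_ofNat]
        ring
      have hint0 : (∫ s in (0:ℝ)..z, W.eval s) = 0 := by
        have hlb := intervalIntegral.integral_nonneg (μ := volume) hz0.le hWnn
        have hub : (∫ s in (0:ℝ)..z, W.eval s) ≤ 0 := by
          rw [hWint]
          linarith
        linarith
      have hzero := eval_zero_of_cont (f := fun x => W.eval x) W.continuous hz0 hWnn hint0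
      have hF'0 : ∀ x ∈ Ico (0:ℝ) z, (derivative Fp).eval x = 0 := by
        intro x hx
        have h : W.eval x = 0 := hzero x ⟨hx.1, hx.2.le⟩
        rw [hWeval] at h
        have h34 : 0 < 3 - 4*x := by nlinarith [hx.2, hcase]
        have hsq : ((derivative Fp).eval x)^2 = 0 := by
          rcases mul_eq_zero.mp h with hc | hc
          · nlinarith
          · exact hc
        exact pow_eq_zero_iff (by norm_num) |>.mp hsq
      have hder0 : derivative Fp = 0 := by
        apply eq_zero_of_infinite_isRoot
        apply Set.Infinite.mono (s := Ico (0:ℝ) z)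
        · intro x hx; exact hF'0 x hx
        · exact Set.Ico_infinite hz0
      have := natDegree_eq_zero_of_derivative_eq_zero hder0
      omega
    · have hIz := hFTC z 1
      have hnn : 0 ≤ ∫ s in z..1, (derivative Ep).eval s := by
        apply intervalIntegral.integral_nonneg hz1
        intro s hs
        rw [hEpderiv]
        simp only [eval_mul, eval_sub, eval_pow, eval_X, eval_ofNat]
        nlinarith [hs.1, hcase, sq_nonneg ((derivative Fp).eval s),
          mul_nonneg (by nlinarith [hs.1, hcase] : (0:ℝ) ≤ 4*s - 3)
            (sq_nonneg ((derivative Fp).eval s))]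
      have h2 : lam * (Fp.eval z)^2 ≤ Ep.eval 1 := by
        have := hEplb z hz0.le hz1
        linarith
      rw [hEp1] at h2
      by_contra hge
      push_neg at hge
      have hF2 : 1 ≤ (Fp.eval z)^2 := by nlinarith
      nlinarith [mul_lt_mul_of_pos_left hend hlam0, mul_le_mul_of_nonneg_left hF2 hlam0.le]
  -- conclude
  have hev : Fp.eval z = 1 - z * p.eval z := by
    rw [hFp]; simp
  by_contra hcon
  push_neg at hcon
  nlinarith [mul_nonneg hz0.le (neg_nonneg.mpr hcon), hFz, hev]
end

section
/- Let E = EuclideanSpace ℂ (Fin n) and F = EuclideanSpace ℂ (Fin m), A : E →L[ℂ] F with adjoint A† = ContinuousLinearMap.adjoint A, b ∈ F, g : E → ℝ convex with respect to the real scalar structure, p : Polynomial ℝ, and P = p(A† ∘L A) the polynomial preconditioner. Suppose x⋆ ∈ E minimizes z ↦ (1/2)‖z − (x⋆ − A†(A x⋆ − b))‖² + g z over E, and suppose for some ŷ ∈ E the point y⁺ minimizes z ↦ (1/2)‖z − (ŷ − P (A† (A ŷ − b)))‖² + g z over E. Then ‖y⁺ − x⋆‖ ≤ ‖ContinuousLinearMap.id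 − P ∘L (A† ∘L A)‖ · ‖ŷ − x⋆‖ + ‖(ContinuousLinearMap.id − P) (A† (A x⋆ − b))‖. (Per-iteration inequality in the proof of Theorem 2.11.) -/
variable {E : Type*} [NormedAddCommGroup E] [InnerProductSpace ℝ E]

lemma prox_subgrad (g : E → ℝ) (hg : ConvexOn ℝ Set.univ g) (v u : E)
    (h : ∀ z : E, (1/2) * ‖u - v‖^2 + g u ≤ (1/2) * ‖z - v‖^2 + g z) :
    ∀ z : E, (inner ℝ (v - u) (z - u) : ℝ) ≤ g z - g u := by
  intro z
  have key : ∀ t : ℝ, 0 < t → t ≤ 1 →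
      (inner ℝ (v - u) (z - u) : ℝ) ≤ g z - g u + (t/2) * ‖z - u‖^2 := by
    intro t ht ht1
    have h1 := h (u + t • (z - u))
    have hconv := hg.2 (Set.mem_univ u) (Set.mem_univ z)
      (show (0:ℝ) ≤ 1 - t by linarith) ht.le (by ring)
    have hcomb : u + t • (z - u) = (1 - t) • u + t • z := by module
    rw [hcomb] at h1
    have hexp : ‖(1 - t) • u + t • z - v‖^2
        = ‖u - v‖^2 + 2 * t * (inner ℝ (u - v) (z - u) : ℝ) + t^2 * ‖z - u‖^2 := by
      have he : (1 - t) • u + t • z - v = (u - v) + t • (z - u) := by module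
      rw [he, norm_add_sq_real, real_inner_smul_right, norm_smul]
      simp [abs_of_pos ht]
      ring
    have hinner : (inner ℝ (u - v) (z - u) : ℝ) = - (inner ℝ (v - u) (z - u) : ℝ) := by
      rw [← inner_neg_left]; congr 1; abel
    simp only [smul_eq_mul] at hconv
    have h4 : t * (inner ℝ (v - u) (z - u) : ℝ)
        ≤ t * ((t/2) * ‖z - u‖^2 + (g z - g u)) := by nlinarith
    have h5 := (mul_le_mul_iff_right₀ ht).mp h4
    linarith
  by_cases hz : z = u
  · simpa [hz] using (key 1 one_pos le_rfl)
  · have hzn : z - u ≠ 0 := sub_ne_zero.mpr hz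
    have hn : (0:ℝ) < ‖z - u‖^2 := pow_pos (norm_pos_iff.mpr hzn) 2
    refine le_of_forall_pos_le_add ?_
    intro ε hε
    set t := min 1 (2 * ε / ‖z - u‖^2) with htdef
    have ht0 : 0 < t := lt_min one_pos (div_pos (by linarith) hn)
    have hk := key t ht0 (min_le_left _ _)
    have hle : t ≤ 2 * ε / ‖z - u‖^2 := min_le_right _ _
    have h3 : t * ‖z - u‖^2 ≤ 2 * ε := (le_div_iff₀ hn).mp hle
    linarith

lemma prox_nonexpansive_s3 (g : E → ℝ) (hg : ConvexOn ℝ Set.univ g) (v v' u u' : E)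
    (h : ∀ z : E, (1/2) * ‖u - v‖^2 + g u ≤ (1/2) * ‖z - v‖^2 + g z)
    (h' : ∀ z : E, (1/2) * ‖u' - v'‖^2 + g u' ≤ (1/2) * ‖z - v'‖^2 + g z) :
    ‖u - u'‖ ≤ ‖v - v'‖ := by
  have k1 := prox_subgrad g hg v u h u'
  have k2 := prox_subgrad g hg v' u' h' u
  have key : (0:ℝ) ≤ inner ℝ ((v - u) - (v' - u')) (u - u') := by
    have e1 : (inner ℝ ((v - u) - (v' - u')) (u - u') : ℝ)
        = inner ℝ (v - u) (u - u') - inner ℝ (v' - u') (u - u') := inner_sub_left _ _ _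
    have e2 : (inner ℝ (v - u) (u - u') : ℝ) = - inner ℝ (v - u) (u' - u) := by
      rw [← inner_neg_right]; congr 1; abel
    linarith [e1, e2, k1, k2]
  have e4 : v - v' = ((v - u) - (v' - u')) + (u - u') := by abel
  have e5 : (inner ℝ (v - v') (u - u') : ℝ)
      = inner ℝ ((v - u) - (v' - u')) (u - u') + ‖u - u'‖^2 := by
    rw [e4, inner_add_left, real_inner_self_eq_norm_sq]
  have hsq : ‖u - u'‖^2 ≤ (inner ℝ (v - v') (u - u') : ℝ) := by rw [e5]; linarith
  have hcs := real_inner_le_norm (v - v') (u - u')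
  by_cases hu : ‖u - u'‖ = 0
  · rw [hu]; positivity
  · have hpos : (0:ℝ) < ‖u - u'‖ := lt_of_le_of_ne (norm_nonneg _) (Ne.symm hu)
    nlinarith

/-- Per-iteration inequality in the proof of Theorem 2.11. -/
theorem preconditioned_pgd_per_iteration_bound (n m : ℕ)
    (A : EuclideanSpace ℂ (Fin n) →L[ℂ] EuclideanSpace ℂ (Fin m))
    (b : EuclideanSpace ℂ (Fin m))
    (g : EuclideanSpace ℂ (Fin n) → ℝ) (hg : ConvexOn ℝ Set.univ g)
    (p : Polynomial ℝ)
    (P : EuclideanSpace ℂ (Fin n) →L[ℂ] EuclideanSpace ℂ (Fin n))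
    (hP : P = Polynomial.aeval
      ((ContinuousLinearMap.adjoint A).comp A) (p.map (algebraMap ℝ ℂ)))
    (xstar yhat yplus : EuclideanSpace ℂ (Fin n))
    (hstar : ∀ z : EuclideanSpace ℂ (Fin n),
      (1/2) * ‖xstar - (xstar - (ContinuousLinearMap.adjoint A) (A xstar - b))‖^2
          + g xstar ≤
      (1/2) * ‖z - (xstar - (ContinuousLinearMap.adjoint A) (A xstar - b))‖^2 + g z)
    (hplus : ∀ z : EuclideanSpace ℂ (Fin n),
      (1/2) * ‖yplus - (yhat - P ((ContinuousLinearMap.adjoint A) (A yhat - b)))‖^2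
          + g yplus ≤
      (1/2) * ‖z - (yhat - P ((ContinuousLinearMap.adjoint A) (A yhat - b)))‖^2 + g z) :
    ‖yplus - xstar‖ ≤
      ‖ContinuousLinearMap.id ℂ (EuclideanSpace ℂ (Fin n))
          - P.comp ((ContinuousLinearMap.adjoint A).comp A)‖ * ‖yhat - xstar‖
        + ‖(ContinuousLinearMap.id ℂ (EuclideanSpace ℂ (Fin n)) - P)
            ((ContinuousLinearMap.adjoint A) (A xstar - b))‖ := by
  set Ad := ContinuousLinearMap.adjoint A with hAd
  set v' := yhat - P (Ad (A yhat - b)) with hv'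
  set v := xstar - Ad (A xstar - b) with hv
  have hne : ‖yplus - xstar‖ ≤ ‖v' - v‖ :=
    prox_nonexpansive_s3 g hg v' v yplus xstar hplus hstar
  have hdecomp : v' - v
      = (ContinuousLinearMap.id ℂ (EuclideanSpace ℂ (Fin n))
          - P.comp (Ad.comp A)) (yhat - xstar)
        + (ContinuousLinearMap.id ℂ (EuclideanSpace ℂ (Fin n)) - P) (Ad (A xstar - b)) := by
    simp only [hv', hv, ContinuousLinearMap.sub_apply, ContinuousLinearMap.comp_apply,
      ContinuousLinearMap.id_apply, map_sub]
    abel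
  calc ‖yplus - xstar‖ ≤ ‖v' - v‖ := hne
    _ ≤ ‖(ContinuousLinearMap.id ℂ (EuclideanSpace ℂ (Fin n))
          - P.comp (Ad.comp A)) (yhat - xstar)‖
        + ‖(ContinuousLinearMap.id ℂ (EuclideanSpace ℂ (Fin n)) - P) (Ad (A xstar - b))‖ := by
        rw [hdecomp]; exact norm_add_le _ _
    _ ≤ _ := by
        gcongr
        exact ContinuousLinearMap.le_opNorm _ _
end

section
/- Let E = EuclideanSpace ℂ (Fin n) and F = EuclideanSpace ℂ (Fin m), A : E →L[ℂ] F with ‖A‖ ≤ 1 and adjoint A† = ContinuousLinearMap.adjoint A, b ∈ F, p : Polynomial ℝ with p.eval z > 0 for every z ∈ (0, 1], and let Q = p(A ∘L A†) be the operator on F obtained by evaluating p (with coefficients mapped into ℂ) at A ∘L A† via Polynomial.aeval. Then for every x ∈ E: x minimizes y ↦ ‖A y − b‖² over E if and only if x minimizes y ↦ RCLike.re ⟪A y − b, Q (A y − b)⟫ over E. In other words, when the regularization is zero, the polynomially preconditioned least-squares problem and the original least-squares problem have identical solution sets. (No noise coloring without regularization, Theorem 2.12.) -/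
set_option linter.unusedSectionVars false
set_option maxHeartbeats 1000000

open ContinuousLinearMap Polynomial

section Aux

variable {E F : Type*} [NormedAddCommGroup F] [InnerProductSpace ℂ F] [CompleteSpace F]
  [NormedAddCommGroup E] [InnerProductSpace ℂ E] [CompleteSpace E]

private lemma aux_commute (T : F →L[ℂ] F) (q : Polynomial ℂ) :
    (aeval T q) * T = T * (aeval T q) := by
  induction q using Polynomial.induction_on with
  | C a => simp [aeval_C, Algebra.commutes]
  | add f g hf hg => simp only [map_add, add_mul, mul_add, hf, hg]
  | monomial k a ih =>
      rw [show (C a * X^(k+1) : Polynomial ℂ) = (C a * X^k) * X by ring, map_mul, aeval_X,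
        ← mul_assoc, ← ih, mul_assoc]

private lemma aux_sa (T : F →L[ℂ] F) (hT : ContinuousLinearMap.adjoint T = T)
    (q : Polynomial ℝ) :
    ContinuousLinearMap.adjoint (aeval T (q.map (algebraMap ℝ ℂ)))
      = aeval T (q.map (algebraMap ℝ ℂ)) := by
  rw [← ContinuousLinearMap.star_eq_adjoint]
  induction q using Polynomial.induction_on with
  | C a =>
      simp [Polynomial.map_C, aeval_C, Algebra.algebraMap_eq_smul_one, star_smul,
        Complex.star_def, Complex.conj_ofReal]
  | add f g hf hg => simp only [Polynomial.map_add, map_add, star_add, hf, hg]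
  | monomial k a ih =>
      have h : ((C a * X ^ (k+1) : Polynomial ℝ).map (algebraMap ℝ ℂ))
          = ((C a * X^k : Polynomial ℝ).map (algebraMap ℝ ℂ)) * X := by
        simp only [Polynomial.map_mul, Polynomial.map_C, Polynomial.map_pow, Polynomial.map_X]
        ring
      rw [h, map_mul, aeval_X, star_mul, ih]
      rw [ContinuousLinearMap.star_eq_adjoint, hT]
      exact (aux_commute T _).symm

private lemma aux_twine (A : E →L[ℂ] F) (q : Polynomial ℂ) (w : F) :
    ContinuousLinearMap.adjoint A ((aeval (A ∘L ContinuousLinearMap.adjoint A) q) w)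
      = (aeval (ContinuousLinearMap.adjoint A ∘L A) q) (ContinuousLinearMap.adjoint A w) := by
  induction q using Polynomial.induction_on generalizing w with
  | C a =>
      simp [aeval_C, Algebra.algebraMap_eq_smul_one, ContinuousLinearMap.smul_apply]
  | add f g hf hg =>
      simp only [map_add, ContinuousLinearMap.add_apply, hf, hg]
  | monomial k a ih =>
      have h1 : (aeval (A ∘L ContinuousLinearMap.adjoint A) (C a * X ^ (k+1))) w
          = (aeval (A ∘L ContinuousLinearMap.adjoint A) (C a * X ^ k))
              ((A ∘L ContinuousLinearMap.adjoint A) w) := by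
        rw [show (C a * X^(k+1) : Polynomial ℂ) = (C a * X^k) * X by ring, map_mul, aeval_X,
          ContinuousLinearMap.mul_apply]
      have h2 : (aeval (ContinuousLinearMap.adjoint A ∘L A) (C a * X ^ (k+1)))
            (ContinuousLinearMap.adjoint A w)
          = (aeval (ContinuousLinearMap.adjoint A ∘L A) (C a * X ^ k))
              ((ContinuousLinearMap.adjoint A ∘L A) (ContinuousLinearMap.adjoint A w)) := by
        rw [show (C a * X^(k+1) : Polynomial ℂ) = (C a * X^k) * X by ring, map_mul, aeval_X,
          ContinuousLinearMap.mul_apply]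
      rw [h1, ih, h2]
      congr 1

private lemma aux_inner (T : F →L[ℂ] F) (hT : ContinuousLinearMap.adjoint T = T)
    {v : F} {μ : ℝ} (hv : T v = (μ:ℂ) • v) (q : Polynomial ℂ) (r : F) :
    (inner ℂ v ((aeval T q) r) : ℂ) = q.eval (μ:ℂ) * inner ℂ v r := by
  induction q using Polynomial.induction_on generalizing r with
  | C a =>
      simp [aeval_C, Algebra.algebraMap_eq_smul_one, ContinuousLinearMap.smul_apply,
        inner_smul_right]
  | add f g hf hg =>
      simp only [map_add, ContinuousLinearMap.add_apply, inner_add_right, hf, hg, eval_add]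
      ring
  | monomial k a ih =>
      have h1 : (aeval T (C a * X ^ (k+1))) r = (aeval T (C a * X ^ k)) (T r) := by
        rw [show (C a * X^(k+1) : Polynomial ℂ) = (C a * X^k) * X by ring, map_mul, aeval_X,
          ContinuousLinearMap.mul_apply]
      have h2 : (inner ℂ v (T r) : ℂ) = (μ:ℂ) * inner ℂ v r := by
        rw [← ContinuousLinearMap.adjoint_inner_left, hT, hv, inner_smul_left]
        simp [Complex.conj_ofReal]
      rw [h1, ih, h2]
      simp only [eval_mul, eval_C, eval_pow, eval_X]
      ring

private lemma aux_key (T : F →L[ℂ] F) (hT : ContinuousLinearMap.adjoint T = T)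
    {N : ℕ} {ob : OrthonormalBasis (Fin N) ℂ F} {μ : Fin N → ℝ}
    (hvT : ∀ i, T (ob i) = (μ i : ℂ) • ob i)
    (q : Polynomial ℝ) (r : F) :
    (inner ℂ r ((aeval T (q.map (algebraMap ℝ ℂ))) r) : ℂ)
      = ((∑ i, q.eval (μ i) * ‖(inner ℂ (ob i) r : ℂ)‖^2 : ℝ) : ℂ) := by
  rw [← ob.sum_inner_mul_inner r ((aeval T (q.map (algebraMap ℝ ℂ))) r)]
  push_cast
  refine Finset.sum_congr rfl fun i _ => ?_
  rw [aux_inner T hT (hvT i)]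
  have he : (q.map (algebraMap ℝ ℂ)).eval ((μ i : ℂ)) = ((q.eval (μ i) : ℝ) : ℂ) := by
    rw [Polynomial.eval_map]; exact Polynomial.eval₂_at_apply _ _
  rw [he]
  have hc : (inner ℂ r (ob i) : ℂ) = starRingEnd ℂ (inner ℂ (ob i) r) := (inner_conj_symm _ _).symm
  have hm := RCLike.conj_mul (K := ℂ) (inner ℂ (ob i) r)
  rw [hc, show starRingEnd ℂ (inner ℂ (ob i) r) * (((q.eval (μ i) : ℝ) : ℂ) * (inner ℂ (ob i) r : ℂ))
    = ((q.eval (μ i) : ℝ) : ℂ) * (starRingEnd ℂ (inner ℂ (ob i) r) * (inner ℂ (ob i) r : ℂ)) by ring,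
    hm]
  norm_num

end Aux

/-- No noise coloring without regularization (Theorem 2.12): the preconditioned and
original least-squares problems have identical solution sets. -/
theorem no_noise_coloring (n m : ℕ)
    (A : EuclideanSpace ℂ (Fin n) →L[ℂ] EuclideanSpace ℂ (Fin m))
    (hA : ‖A‖ ≤ 1)
    (b : EuclideanSpace ℂ (Fin m))
    (p : Polynomial ℝ) (hp : ∀ z ∈ Set.Ioc (0:ℝ) 1, 0 < p.eval z)
    (Q : EuclideanSpace ℂ (Fin m) →L[ℂ] EuclideanSpace ℂ (Fin m))
    (hQ : Q = Polynomial.aeval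
      (A.comp (ContinuousLinearMap.adjoint A)) (p.map (algebraMap ℝ ℂ))) :
    ∀ x : EuclideanSpace ℂ (Fin n),
      (∀ y : EuclideanSpace ℂ (Fin n), ‖A x - b‖^2 ≤ ‖A y - b‖^2) ↔
      (∀ y : EuclideanSpace ℂ (Fin n),
        RCLike.re (inner ℂ (A x - b) (Q (A x - b)) : ℂ) ≤
        RCLike.re (inner ℂ (A y - b) (Q (A y - b)) : ℂ)) := by
  intro x
  have hsa : ContinuousLinearMap.adjoint (A ∘L ContinuousLinearMap.adjoint A)
      = A ∘L ContinuousLinearMap.adjoint A := by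
    rw [ContinuousLinearMap.adjoint_comp, ContinuousLinearMap.adjoint_adjoint]
  have hsym : ((A ∘L ContinuousLinearMap.adjoint A : EuclideanSpace ℂ (Fin m) →L[ℂ] EuclideanSpace ℂ (Fin m)) : EuclideanSpace ℂ (Fin m) →ₗ[ℂ] EuclideanSpace ℂ (Fin m)).IsSymmetric :=
    (ContinuousLinearMap.isSelfAdjoint_iff'.mpr hsa).isSymmetric
  have hm : Module.finrank ℂ (EuclideanSpace ℂ (Fin m)) = m := finrank_euclideanSpace_fin
  set ob := hsym.eigenvectorBasis hm with hob
  set μ := hsym.eigenvalues hm with hμdef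
  have hvT : ∀ i, (A ∘L ContinuousLinearMap.adjoint A) (ob i) = (μ i : ℂ) • ob i :=
    fun i => hsym.apply_eigenvectorBasis hm i
  -- eigenvalues are ‖A† vᵢ‖²
  have hμval : ∀ i, (μ i : ℝ) = ‖ContinuousLinearMap.adjoint A (ob i)‖^2 := by
    intro i
    have h1 : (inner ℂ (ob i) ((A ∘L ContinuousLinearMap.adjoint A) (ob i)) : ℂ)
        = ((μ i : ℝ) : ℂ) := by
      rw [hvT i, inner_smul_right, inner_self_eq_norm_sq_to_K]
      simp [ob.orthonormal.1 i]
    have h2 : (inner ℂ (ob i) ((A ∘L ContinuousLinearMap.adjoint A) (ob i)) : ℂ)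
        = ((‖ContinuousLinearMap.adjoint A (ob i)‖^2 : ℝ) : ℂ) := by
      have h3 : (A ∘L ContinuousLinearMap.adjoint A) (ob i)
          = A (ContinuousLinearMap.adjoint A (ob i)) := rfl
      rw [h3, ← ContinuousLinearMap.adjoint_inner_left, inner_self_eq_norm_sq_to_K]
      norm_num
    exact_mod_cast h1.symm.trans h2
  have hμ0 : ∀ i, 0 ≤ μ i := fun i => (hμval i) ▸ sq_nonneg _
  have hμ1 : ∀ i, μ i ≤ 1 := by
    intro i
    rw [hμval i]
    have hn : ‖ContinuousLinearMap.adjoint A (ob i)‖ ≤ 1 := by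
      calc ‖ContinuousLinearMap.adjoint A (ob i)‖
          ≤ ‖ContinuousLinearMap.adjoint A‖ * ‖ob i‖ := le_opNorm _ _
        _ ≤ 1 := by
            rw [LinearIsometryEquiv.norm_map ContinuousLinearMap.adjoint A, ob.orthonormal.1 i,
              mul_one]
            exact hA
    nlinarith [norm_nonneg (ContinuousLinearMap.adjoint A (ob i))]
  -- kernel eigenvectors are orthogonal to the range of A
  have hker : ∀ i, μ i = 0 → ∀ u, (inner ℂ (ob i) (A u) : ℂ) = 0 := by
    intro i h0 u
    have hz : ContinuousLinearMap.adjoint A (ob i) = 0 := by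
      have h4 := hμval i
      rw [h0] at h4
      have h5 : ‖ContinuousLinearMap.adjoint A (ob i)‖ = 0 := by
        nlinarith [norm_nonneg (ContinuousLinearMap.adjoint A (ob i))]
      simpa using h5
    rw [← ContinuousLinearMap.adjoint_inner_left, hz, inner_zero_left]
  -- key spectral formula
  have key : ∀ (q : Polynomial ℝ) (r : EuclideanSpace ℂ (Fin m)),
      (inner ℂ r ((aeval (A ∘L ContinuousLinearMap.adjoint A) (q.map (algebraMap ℝ ℂ))) r) : ℂ)
        = ((∑ i, q.eval (μ i) * ‖(inner ℂ (ob i) r : ℂ)‖^2 : ℝ) : ℂ) :=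
    fun q r => aux_key _ hsa hvT q r
  -- semidefiniteness of Q on the range of A
  have nonneg : ∀ u, 0 ≤ RCLike.re (inner ℂ (A u) (Q (A u)) : ℂ) := by
    intro u
    rw [hQ]
    have := key p (A u)
    rw [show (A.comp (ContinuousLinearMap.adjoint A)) = A ∘L ContinuousLinearMap.adjoint A
        from rfl, this]
    simp only [RCLike.ofReal_re, Complex.ofReal_re, RCLike.re_to_complex]
    apply Finset.sum_nonneg
    intro i _
    rcases eq_or_lt_of_le (hμ0 i) with h | h
    · rw [hker i h.symm u]
      simp
    · exact mul_nonneg (hp (μ i) ⟨h, hμ1 i⟩).le (sq_nonneg _)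
  have hQsa : ContinuousLinearMap.adjoint Q = Q := by
    rw [hQ]; exact aux_sa _ hsa p
  -- expansion of the objectives
  have expandL : ∀ y : EuclideanSpace ℂ (Fin n), ‖A y - b‖^2
      = ‖A x - b‖^2 + 2 * RCLike.re (inner ℂ (A (y - x)) (A x - b) : ℂ) + ‖A (y - x)‖^2 := by
    intro y
    have hd : A y - b = A (y - x) + (A x - b) := by rw [map_sub]; abel
    rw [hd, norm_add_sq (𝕜 := ℂ)]
    ring
  have expandR : ∀ y : EuclideanSpace ℂ (Fin n),
      RCLike.re (inner ℂ (A y - b) (Q (A y - b)) : ℂ)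
      = RCLike.re (inner ℂ (A x - b) (Q (A x - b)) : ℂ)
        + 2 * RCLike.re (inner ℂ (A (y - x)) (Q (A x - b)) : ℂ)
        + RCLike.re (inner ℂ (A (y - x)) (Q (A (y - x))) : ℂ) := by
    intro y
    have hd : A y - b = A (y - x) + (A x - b) := by rw [map_sub]; abel
    have hcross : RCLike.re (inner ℂ (A x - b) (Q (A (y - x))) : ℂ)
        = RCLike.re (inner ℂ (A (y - x)) (Q (A x - b)) : ℂ) := by
      rw [← ContinuousLinearMap.adjoint_inner_left Q, hQsa,
        ← inner_conj_symm (A (y - x)) (Q (A x - b))]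
      exact (RCLike.conj_re _).symm
    rw [hd, map_add, inner_add_left, inner_add_right, inner_add_right, map_add, map_add,
      map_add, hcross]
    ring
  -- characterization of least-squares minimizers
  have charL : (∀ y : EuclideanSpace ℂ (Fin n), ‖A x - b‖^2 ≤ ‖A y - b‖^2)
      ↔ ContinuousLinearMap.adjoint A (A x - b) = 0 := by
    constructor
    · intro hmin
      by_contra hne
      set u := ContinuousLinearMap.adjoint A (A x - b) with hu
      have hupos : (0:ℝ) < ‖u‖^2 := pow_pos (norm_pos_iff.mpr hne) 2
      set K := ‖A u‖^2 with hK
      have hKpos : (0:ℝ) ≤ K := sq_nonneg _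
      set t : ℝ := ‖u‖^2 / (K + 1) with ht
      have htpos : 0 < t := div_pos hupos (by linarith)
      have h1 := hmin (x - (t:ℂ) • u)
      rw [expandL (x - (t:ℂ) • u)] at h1
      have hd : A ((x - (t:ℂ) • u) - x) = -((t:ℂ) • A u) := by
        rw [show (x - (t:ℂ) • u) - x = -((t:ℂ) • u) by abel, map_neg, map_smul]
      rw [hd] at h1
      have hAQ1 : (inner ℂ (A u) (A x - b) : ℂ) = inner ℂ u u := by
        rw [← ContinuousLinearMap.adjoint_inner_right, ← hu]
      have hcross : RCLike.re (inner ℂ (-((t:ℂ) • A u)) (A x - b) : ℂ) = -(t * ‖u‖^2) := by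
        have hre : RCLike.re ((starRingEnd ℂ) ((t:ℝ):ℂ) * (inner ℂ u u : ℂ)) = t * ‖u‖^2 := by
          rw [Complex.conj_ofReal, RCLike.re_to_complex, Complex.re_ofReal_mul,
            ← RCLike.re_to_complex, inner_self_eq_norm_sq]
        rw [inner_neg_left, inner_smul_left, hAQ1, map_neg, hre]
      have hnrm : ‖-((t:ℂ) • A u)‖^2 = t^2 * K := by
        rw [norm_neg, norm_smul, hK]
        simp [abs_of_pos htpos]
        ring
      rw [hcross, hnrm] at h1
      have h2 : t * (K + 1) = ‖u‖^2 := by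
        rw [ht]; field_simp
      have h3 : t * (t * (K + 1)) = t * ‖u‖^2 := by rw [h2]
      nlinarith [h1, h3, mul_pos htpos hupos, sq_nonneg t]
    · intro h0 y
      rw [expandL y]
      have hcross : RCLike.re (inner ℂ (A (y - x)) (A x - b) : ℂ) = 0 := by
        rw [← ContinuousLinearMap.adjoint_inner_right, h0, inner_zero_right]
        simp
      rw [hcross]
      nlinarith [sq_nonneg ‖A (y - x)‖]
  -- characterization of preconditioned minimizers
  have charR : (∀ y : EuclideanSpace ℂ (Fin n),
        RCLike.re (inner ℂ (A x - b) (Q (A x - b)) : ℂ)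
          ≤ RCLike.re (inner ℂ (A y - b) (Q (A y - b)) : ℂ))
      ↔ ContinuousLinearMap.adjoint A (Q (A x - b)) = 0 := by
    constructor
    · intro hmin
      by_contra hne
      set u := ContinuousLinearMap.adjoint A (Q (A x - b)) with hu
      have hupos : (0:ℝ) < ‖u‖^2 := pow_pos (norm_pos_iff.mpr hne) 2
      set K := RCLike.re (inner ℂ (A u) (Q (A u)) : ℂ) with hK
      have hKpos : (0:ℝ) ≤ K := nonneg u
      set t : ℝ := ‖u‖^2 / (K + 1) with ht
      have htpos : 0 < t := div_pos hupos (by linarith)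
      have h1 := hmin (x - (t:ℂ) • u)
      rw [expandR (x - (t:ℂ) • u)] at h1
      have hd : A ((x - (t:ℂ) • u) - x) = -((t:ℂ) • A u) := by
        rw [show (x - (t:ℂ) • u) - x = -((t:ℂ) • u) by abel, map_neg, map_smul]
      rw [hd] at h1
      have hAQ : (inner ℂ (A u) (Q (A x - b)) : ℂ) = inner ℂ u u := by
        rw [← ContinuousLinearMap.adjoint_inner_right, ← hu]
      have hcross : RCLike.re (inner ℂ (-((t:ℂ) • A u)) (Q (A x - b)) : ℂ) = -(t * ‖u‖^2) := by
        have hre : RCLike.re ((starRingEnd ℂ) ((t:ℝ):ℂ) * (inner ℂ u u : ℂ)) = t * ‖u‖^2 := by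
          rw [Complex.conj_ofReal, RCLike.re_to_complex, Complex.re_ofReal_mul,
            ← RCLike.re_to_complex, inner_self_eq_norm_sq]
        rw [inner_neg_left, inner_smul_left, hAQ, map_neg, hre]
      have hquad : RCLike.re (inner ℂ (-((t:ℂ) • A u)) (Q (-((t:ℂ) • A u))) : ℂ) = t^2 * K := by
        rw [map_neg, map_smul, inner_neg_neg, inner_smul_left, inner_smul_right, hK]
        rw [show (starRingEnd ℂ) ((t:ℝ):ℂ) = ((t:ℝ):ℂ) from Complex.conj_ofReal t]
        rw [show ((t:ℝ):ℂ) * (((t:ℝ):ℂ) * (inner ℂ (A u) (Q (A u)) : ℂ))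
          = (((t^2:ℝ)):ℂ) * (inner ℂ (A u) (Q (A u)) : ℂ) by push_cast; ring]
        rw [RCLike.re_to_complex, Complex.re_ofReal_mul, ← RCLike.re_to_complex]
      rw [hcross, hquad] at h1
      have h2 : t * (K + 1) = ‖u‖^2 := by
        rw [ht]; field_simp
      have h3 : t * (t * (K + 1)) = t * ‖u‖^2 := by rw [h2]
      nlinarith [h1, h3, mul_pos htpos hupos, sq_nonneg t]
    · intro h0 y
      rw [expandR y]
      have hcross : RCLike.re (inner ℂ (A (y - x)) (Q (A x - b)) : ℂ) = 0 := by
        rw [← ContinuousLinearMap.adjoint_inner_right, h0, inner_zero_right]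
        simp
      rw [hcross]
      have := nonneg (y - x)
      linarith
  -- the bridge between the two normal equations
  have bridge : ContinuousLinearMap.adjoint A (A x - b) = 0
      ↔ ContinuousLinearMap.adjoint A (Q (A x - b)) = 0 := by
    constructor
    · intro h
      rw [hQ, show (A.comp (ContinuousLinearMap.adjoint A))
          = A ∘L ContinuousLinearMap.adjoint A from rfl,
        aux_twine A (p.map (algebraMap ℝ ℂ)) (A x - b), h, map_zero]
    · intro hu
      -- the vanishing of the mixed spectral sum
      have e2 : (A ∘L ContinuousLinearMap.adjoint A) (Q (A x - b)) = 0 := by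
        rw [show (A ∘L ContinuousLinearMap.adjoint A) (Q (A x - b))
            = A (ContinuousLinearMap.adjoint A (Q (A x - b))) from rfl, hu, map_zero]
      have e1 : (aeval (A ∘L ContinuousLinearMap.adjoint A)
          ((X * p).map (algebraMap ℝ ℂ))) (A x - b)
          = (A ∘L ContinuousLinearMap.adjoint A) (Q (A x - b)) := by
        rw [Polynomial.map_mul, Polynomial.map_X, map_mul, aeval_X,
          ContinuousLinearMap.mul_apply, hQ]
      have hsum0 : (∑ i, (X * p).eval (μ i) * ‖(inner ℂ (ob i) (A x - b) : ℂ)‖^2 : ℝ) = 0 := by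
        have h5 := key (X * p) (A x - b)
        rw [e1, e2, inner_zero_right] at h5
        exact_mod_cast h5.symm
      have hterm : ∀ i ∈ Finset.univ,
          (0:ℝ) ≤ (X * p).eval (μ i) * ‖(inner ℂ (ob i) (A x - b) : ℂ)‖^2 := by
        intro i _
        rcases eq_or_lt_of_le (hμ0 i) with h | h
        · simp [eval_mul, eval_X, ← h]
        · have := hp (μ i) ⟨h, hμ1 i⟩
          rw [eval_mul, eval_X]
          positivity
      have hzero := (Finset.sum_eq_zero_iff_of_nonneg hterm).mp hsum0
      -- conclude that A† (A x - b) = 0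
      have hn2 : ‖ContinuousLinearMap.adjoint A (A x - b)‖^2
          = RCLike.re (inner ℂ (A x - b)
              ((A ∘L ContinuousLinearMap.adjoint A) (A x - b)) : ℂ) := by
        rw [show (A ∘L ContinuousLinearMap.adjoint A) (A x - b)
            = A (ContinuousLinearMap.adjoint A (A x - b)) from rfl,
          ← ContinuousLinearMap.adjoint_inner_left]
        exact (inner_self_eq_norm_sq _).symm
      have hXkey := key X (A x - b)
      rw [Polynomial.map_X, aeval_X] at hXkey
      have hsumX : (∑ i, X.eval (μ i) * ‖(inner ℂ (ob i) (A x - b) : ℂ)‖^2 : ℝ) = 0 := by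
        apply Finset.sum_eq_zero
        intro i _
        rcases eq_or_lt_of_le (hμ0 i) with h | h
        · simp [eval_X, ← h]
        · have hPi := hp (μ i) ⟨h, hμ1 i⟩
          have := hzero i (Finset.mem_univ i)
          rw [eval_mul, eval_X] at this
          have hc0 : ‖(inner ℂ (ob i) (A x - b) : ℂ)‖^2 = 0 := by
            by_contra hcc
            have : 0 < ‖(inner ℂ (ob i) (A x - b) : ℂ)‖^2 :=
              lt_of_le_of_ne (sq_nonneg _) (Ne.symm hcc)
            nlinarith [mul_pos (mul_pos h hPi) this]
          rw [hc0, mul_zero]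
      have : ‖ContinuousLinearMap.adjoint A (A x - b)‖^2 = 0 := by
        rw [hn2, hXkey]
        rw [hsumX]
        simp
      have : ‖ContinuousLinearMap.adjoint A (A x - b)‖ = 0 := by
        nlinarith [norm_nonneg (ContinuousLinearMap.adjoint A (A x - b))]
      simpa using this
  exact charL.trans (bridge.trans charR.symm)
end

section
/- Let E = EuclideanSpace ℂ (Fin n) and F = EuclideanSpace ℂ (Fin m), A : E →L[ℂ] F with ‖A‖ ≤ 1 and adjoint A† = ContinuousLinearMap.adjoint A, p : Polynomial ℝ with p.eval z > 0 for every z ∈ (0, 1], and let Q = p(A ∘L A†) be the operator on F obtained by evaluating p (with coefficients mapped into ℂ) at A ∘L A† via Polynomial.aeval. If b lies in the range of A, then for every x ∈ E: A x = b if and only if Q (A x) = Q b. (The preconditioned constraint enforces the original constraint, Lemma 2.6.) -/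
open ContinuousLinearMap Polynomial in
private lemma aux_pow_eigen {F : Type*} [NormedAddCommGroup F] [InnerProductSpace ℂ F]
    (T : F →L[ℂ] F) (v : F) (c : ℂ) (hv : T v = c • v) :
    ∀ k : ℕ, (T ^ k) v = c ^ k • v
  | 0 => by simp
  | k + 1 => by
      rw [pow_succ, ContinuousLinearMap.mul_apply, hv, map_smul,
        aux_pow_eigen T v c hv k, smul_smul, pow_succ, mul_comm]

open ContinuousLinearMap Polynomial in
private lemma aux_aeval_eigen {F : Type*} [NormedAddCommGroup F] [InnerProductSpace ℂ F]
    (T : F →L[ℂ] F) (v : F) (c : ℂ) (hv : T v = c • v) (q : Polynomial ℂ) :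
    (Polynomial.aeval T q) v = q.eval c • v := by
  induction q using Polynomial.induction_on' with
  | add f g hf hg =>
      simp [ContinuousLinearMap.add_apply, hf, hg, add_smul]
  | monomial k a =>
      rw [Polynomial.aeval_monomial, Polynomial.eval_monomial,
        ContinuousLinearMap.mul_apply, aux_pow_eigen T v c hv k, map_smul,
        Algebra.algebraMap_eq_smul_one, ContinuousLinearMap.smul_apply,
        ContinuousLinearMap.one_apply, smul_smul, mul_comm]

/-- The preconditioned constraint enforces the original constraint (Lemma 2.6). -/
theorem preconditioned_constraint_equivalence (n m : ℕ)
    (A : EuclideanSpace ℂ (Fin n) →L[ℂ] EuclideanSpace ℂ (Fin m))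
    (hA : ‖A‖ ≤ 1)
    (p : Polynomial ℝ) (hp : ∀ z ∈ Set.Ioc (0:ℝ) 1, 0 < p.eval z)
    (Q : EuclideanSpace ℂ (Fin m) →L[ℂ] EuclideanSpace ℂ (Fin m))
    (hQ : Q = Polynomial.aeval
      (A.comp (ContinuousLinearMap.adjoint A)) (p.map (algebraMap ℝ ℂ)))
    (b : EuclideanSpace ℂ (Fin m)) (hb : b ∈ Set.range A) :
    ∀ x : EuclideanSpace ℂ (Fin n), A x = b ↔ Q (A x) = Q b := by
  classical
  set A' := ContinuousLinearMap.adjoint A with hA'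
  set T := A.comp A' with hT
  -- T is self-adjoint
  have hsa : IsSelfAdjoint T := by
    rw [ContinuousLinearMap.isSelfAdjoint_iff']
    rw [hT, ContinuousLinearMap.adjoint_comp, hA', ContinuousLinearMap.adjoint_adjoint]
  have hsym : (T : EuclideanSpace ℂ (Fin m) →ₗ[ℂ] EuclideanSpace ℂ (Fin m)).IsSymmetric := hsa.isSymmetric
  have hn : Module.finrank ℂ (EuclideanSpace ℂ (Fin m)) = m := finrank_euclideanSpace_fin
  set B := hsym.eigenvectorBasis hn with hB
  set μ := hsym.eigenvalues hn with hμ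
  have heig : ∀ i, T (B i) = (μ i : ℂ) • B i := fun i =>
    hsym.apply_eigenvectorBasis hn i
  have hnorm1 : ∀ i, ‖B i‖ = 1 := fun i => B.orthonormal.1 i
  -- eigenvalue identity : μ i = ‖A' (B i)‖ ^ 2
  have hval : ∀ i, (μ i : ℝ) = ‖A' (B i)‖ ^ 2 := by
    intro i
    have h1 : (inner ℂ (B i) (T (B i)) : ℂ) = (μ i : ℂ) := by
      rw [heig i, inner_smul_right, inner_self_eq_norm_sq_to_K, hnorm1 i]
      norm_num
    have h2 : (inner ℂ (B i) (T (B i)) : ℂ) = (‖A' (B i)‖ : ℂ) ^ 2 := by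
      have : T (B i) = A (A' (B i)) := rfl
      rw [this, ← ContinuousLinearMap.adjoint_inner_left, ← hA',
        inner_self_eq_norm_sq_to_K]
      norm_num
    have := h1.symm.trans h2
    exact_mod_cast this
  have hApos : ∀ i, 0 ≤ μ i := fun i => by rw [hval i]; positivity
  have hAle : ∀ i, μ i ≤ 1 := by
    intro i
    rw [hval i]
    have hadj : ‖A'‖ = ‖A‖ := LinearIsometryEquiv.norm_map _ A
    have h1 : ‖A' (B i)‖ ≤ ‖A'‖ * ‖B i‖ := A'.le_opNorm _
    rw [hnorm1 i, mul_one, hadj] at h1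
    calc ‖A' (B i)‖ ^ 2 ≤ 1 ^ 2 := by
          apply pow_le_pow_left₀ (norm_nonneg _) (h1.trans hA)
      _ = 1 := one_pow 2
  -- action of Q on eigenvectors
  have hQeig : ∀ i, Q (B i) = ((p.eval (μ i) : ℝ) : ℂ) • B i := by
    intro i
    rw [hQ, aux_aeval_eigen T (B i) (μ i : ℂ) (heig i)]
    congr 1
    rw [Polynomial.eval_map]
    exact Polynomial.eval₂_at_apply (algebraMap ℝ ℂ) (μ i)
  obtain ⟨y, hy⟩ := hb
  intro x
  constructor
  · intro h; rw [h]
  · intro h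
    -- u := A x - b lies in range of A and Q u = 0
    set u := A x - b with hu
    have hQu : Q u = 0 := by
      rw [hu, map_sub, h, sub_self]
    have huA : u = A (x - y) := by rw [map_sub, hy]
    -- show all coordinates of u vanish
    have hcoord : ∀ i, (inner ℂ (B i) u : ℂ) = 0 := by
      intro i
      by_cases hzero : μ i = 0
      · -- eigenvalue 0 : A' (B i) = 0
        have : ‖A' (B i)‖ ^ 2 = 0 := by rw [← hval i, hzero]
        have hA'0 : A' (B i) = 0 := by
          have := pow_eq_zero_iff (n := 2) (by norm_num) |>.mp this
          exact norm_eq_zero.mp this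
        rw [huA, ← ContinuousLinearMap.adjoint_inner_left, ← hA', hA'0,
          inner_zero_left]
      · -- eigenvalue in (0,1] : p (μ i) ≠ 0
        have hmem : μ i ∈ Set.Ioc (0:ℝ) 1 :=
          ⟨lt_of_le_of_ne (hApos i) (Ne.symm hzero), hAle i⟩
        have hpne : ((p.eval (μ i) : ℝ) : ℂ) ≠ 0 := by
          exact_mod_cast (hp _ hmem).ne'
        -- expand Q u via the basis
        have hexp : Q u = ∑ j, ((inner ℂ (B j) u : ℂ) * ((p.eval (μ j) : ℝ) : ℂ)) • B j := by
          conv_lhs => rw [← B.sum_repr' u]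
          rw [map_sum]
          congr 1
          ext j
          rw [map_smul, hQeig j, smul_smul]
        have h0 : (inner ℂ (B i) (Q u) : ℂ) = 0 := by rw [hQu, inner_zero_right]
        rw [hexp, inner_sum] at h0
        simp only [inner_smul_right] at h0
        have horth := orthonormal_iff_ite.mp B.orthonormal
        rw [Finset.sum_eq_single i] at h0
        · rw [horth i i, if_pos rfl, mul_one] at h0
          exact (mul_eq_zero.mp h0).resolve_right hpne
        · intro j _ hji
          rw [horth i j, if_neg (Ne.symm hji), mul_zero]
        · intro hni; exact absurd (Finset.mem_univ i) hni
    have : u = 0 := by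
      rw [← B.sum_repr' u]
      simp only [hcoord, zero_smul, Finset.sum_const_zero]
    rw [hu, sub_eq_zero] at this
    exact this
end

section
/- Let E = EuclideanSpace ℂ (Fin n) and F = EuclideanSpace ℂ (Fin m), A : E →L[ℂ] F with ‖A‖ ≤ 1 and adjoint A† = ContinuousLinearMap.adjoint A, p : Polynomial ℝ with p.eval z > 0 for every z ∈ (0, 1], and let Q = p(A ∘L A†) be the operator on F obtained by evaluating p (with coefficients mapped into ℂ) at A ∘L A† via Polynomial.aeval. Then Q is injective on the range of A: for every y in the range of A, Q y = 0 implies y = 0. (Core of the proof of Lemma 2.6.) -/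
open Polynomial

lemma aeval_apply_eigen {F : Type} [NormedAddCommGroup F] [InnerProductSpace ℂ F]
    {T : F →L[ℂ] F} {μ : ℂ} {v : F} (h : T v = μ • v) (q : ℂ[X]) :
    (Polynomial.aeval T q) v = q.eval μ • v := by
  induction q using Polynomial.induction_on' with
  | add a b ha hb => simp [ha, hb, add_smul]
  | monomial k a =>
    have hpow : ∀ k : ℕ, (T ^ k) v = μ ^ k • v := by
      intro k
      induction k with
      | zero => simp
      | succ k ih =>
        rw [pow_succ, pow_succ, ContinuousLinearMap.mul_apply, h, map_smul, ih,
          smul_smul, mul_comm]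
    simp [Polynomial.aeval_monomial, hpow, smul_smul, Algebra.algebraMap_eq_smul_one]

/-- Core of the proof of Lemma 2.6: the polynomial preconditioner is injective
on the range of `A`. -/
theorem preconditioner_injective_on_range (n m : ℕ)
    (A : EuclideanSpace ℂ (Fin n) →L[ℂ] EuclideanSpace ℂ (Fin m))
    (hA : ‖A‖ ≤ 1)
    (p : Polynomial ℝ) (hp : ∀ z ∈ Set.Ioc (0:ℝ) 1, 0 < p.eval z)
    (Q : EuclideanSpace ℂ (Fin m) →L[ℂ] EuclideanSpace ℂ (Fin m))
    (hQ : Q = Polynomial.aeval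
      (A.comp (ContinuousLinearMap.adjoint A)) (p.map (algebraMap ℝ ℂ))) :
    ∀ y ∈ Set.range A, Q y = 0 → y = 0 := by
  set F := EuclideanSpace ℂ (Fin m)
  set T : F →L[ℂ] F := A.comp (ContinuousLinearMap.adjoint A) with hT
  have hsa : IsSelfAdjoint T := by
    rw [ContinuousLinearMap.isSelfAdjoint_iff']
    rw [hT, ContinuousLinearMap.adjoint_comp, ContinuousLinearMap.adjoint_adjoint]
  have hsym : (↑T : F →ₗ[ℂ] F).IsSymmetric := hsa.isSymmetric
  have hm : Module.finrank ℂ F = m := finrank_euclideanSpace_fin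
  set b := hsym.eigenvectorBasis hm with hb
  set μ := hsym.eigenvalues hm with hμ
  have hTb : ∀ i, T (b i) = (μ i : ℂ) • b i := fun i => hsym.apply_eigenvectorBasis hm i
  have hinner : ∀ i, (inner ℂ (b i) (T (b i)) : ℂ)
      = ((‖(ContinuousLinearMap.adjoint A) (b i)‖ : ℝ) : ℂ)^2 := by
    intro i
    rw [show T (b i) = A ((ContinuousLinearMap.adjoint A) (b i)) from rfl]
    rw [← ContinuousLinearMap.adjoint_inner_left, inner_self_eq_norm_sq_to_K]
    norm_cast
  have hμ0 : ∀ i, 0 ≤ μ i := by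
    intro i
    have h1 : (inner ℂ (b i) (T (b i)) : ℂ) = (μ i : ℂ) := by
      rw [hTb i, inner_smul_right, inner_self_eq_norm_sq_to_K, b.orthonormal.1 i]
      simp
    have : (μ i) = ‖(ContinuousLinearMap.adjoint A) (b i)‖^2 := by
      exact_mod_cast h1.symm.trans (hinner i)
    rw [this]; positivity
  have hμ1 : ∀ i, μ i ≤ 1 := by
    intro i
    have hnb : ‖b i‖ = 1 := b.orthonormal.1 i
    have h1 : ‖T (b i)‖ = |μ i| := by
      rw [hTb i, norm_smul, hnb]; simp
    have h2 : ‖T (b i)‖ ≤ 1 := by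
      calc ‖T (b i)‖ ≤ ‖T‖ * ‖b i‖ := T.le_opNorm _
        _ ≤ 1 := by
          rw [hnb, mul_one, hT]
          calc ‖A.comp (ContinuousLinearMap.adjoint A)‖
              ≤ ‖A‖ * ‖ContinuousLinearMap.adjoint A‖ := ContinuousLinearMap.opNorm_comp_le _ _
            _ ≤ 1 := by
              rw [LinearIsometryEquiv.norm_map ContinuousLinearMap.adjoint A]
              nlinarith [norm_nonneg A]
    calc μ i ≤ |μ i| := le_abs_self _
      _ ≤ 1 := by rw [← h1]; exact h2
  have hQb : ∀ i, Q (b i) = ((p.eval (μ i) : ℝ) : ℂ) • b i := by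
    intro i
    rw [hQ, aeval_apply_eigen (hTb i)]
    congr 1
    rw [Polynomial.eval_map,
      show ((μ i : ℝ) : ℂ) = algebraMap ℝ ℂ (μ i) from rfl, Polynomial.eval₂_at_apply]
    exact congrFun Complex.coe_algebraMap _
  rintro y ⟨x, rfl⟩ hQy
  have hQAx : Q (A x) = ∑ j, (b.repr (A x) j * ((p.eval (μ j) : ℝ) : ℂ)) • b j := by
    conv_lhs => rw [← b.sum_repr (A x)]
    rw [map_sum]
    refine Finset.sum_congr rfl fun j _ => ?_
    rw [map_smul, hQb j, smul_smul]
  have hcoef : ∀ i, b.repr (A x) i = 0 := by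
    intro i
    by_cases h0 : μ i = 0
    · have hadj : (ContinuousLinearMap.adjoint A) (b i) = 0 := by
        have h2 := hinner i
        rw [hTb i, h0] at h2
        simp only [Complex.ofReal_zero, zero_smul, inner_zero_right] at h2
        have hn : ‖(ContinuousLinearMap.adjoint A) (b i)‖ = 0 := by
          have : ((‖(ContinuousLinearMap.adjoint A) (b i)‖ : ℝ) : ℂ)^2 = 0 := h2.symm.trans (inner_zero_right _)
          have := pow_eq_zero_iff (n := 2) (by norm_num) |>.mp this
          exact_mod_cast this
        exact norm_eq_zero.mp hn
      rw [b.repr_apply_apply, ← ContinuousLinearMap.adjoint_inner_left, hadj, inner_zero_left]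
    · have hpμ : p.eval (μ i) ≠ 0 :=
        ne_of_gt (hp (μ i) ⟨lt_of_le_of_ne (hμ0 i) (Ne.symm h0), hμ1 i⟩)
      have h := b.orthonormal.inner_right_fintype
        (fun j => b.repr (A x) j * ((p.eval (μ j) : ℝ) : ℂ)) i
      rw [← hQAx, hQy, inner_zero_right] at h
      have h' := h.symm
      rcases mul_eq_zero.mp h' with h'' | h''
      · exact h''
      · exact absurd (by exact_mod_cast h'') hpμ
  have := b.sum_repr (A x)
  rw [← this]
  simp [hcoef]
end

section
/- Let E = EuclideanSpace ℂ (Fin n) and F = EuclideanSpace ℂ (Fin m), A : E →L[ℂ] F with adjoint A† = ContinuousLinearMap.adjoint A, b ∈ F, and let g : E → ℝ be convex with respect to the real scalar structure. Then x⋆ ∈ E minimizes x ↦ (1/2)‖A x − b‖² + g x over E if and only if x⋆ minimizes z ↦ (1/2)‖z − (x⋆ − A†(A x⋆ − b))‖² + g z over E, i.e. if and only if x⋆ is a proximal point of g at its own gradient step x⋆ − A†(A x⋆ − b). (Fixed point property of proximal gradient descent, Theorem 2.1.) -/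
open RCLike

private lemma pgd_aux (c k : ℝ) (hk : 0 ≤ k)
    (h : ∀ t : ℝ, 0 < t → t ≤ 1 → 0 ≤ t * c + t ^ 2 * k) : 0 ≤ c := by
  by_contra hc
  push_neg at hc
  rcases eq_or_lt_of_le hk with hk0 | hk0
  · have := h 1 one_pos le_rfl
    nlinarith
  · set t := min 1 (-c / (2 * k)) with htdef
    have ht1 : t ≤ 1 := min_le_left _ _
    have ht2 : t ≤ -c / (2 * k) := min_le_right _ _
    have htpos : 0 < t := lt_min one_pos (div_pos (by linarith) (by linarith))
    have := h t htpos ht1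
    have h2k : t * (2 * k) ≤ -c := (le_div_iff₀ (by linarith)).mp ht2
    nlinarith

private lemma pgd_quad_expand {E : Type*} [NormedAddCommGroup E] [InnerProductSpace ℂ E]
    (u v : E) (t : ℝ) :
    ‖u + (t : ℂ) • v‖ ^ 2 = ‖u‖ ^ 2 + 2 * t * re ((inner ℂ u v : ℂ)) + t ^ 2 * ‖v‖ ^ 2 := by
  rw [norm_add_sq (𝕜 := ℂ), inner_smul_right]
  have h1 : re ((t : ℂ) * (inner ℂ u v : ℂ)) = t * re ((inner ℂ u v : ℂ)) := by simp
  have h2 : ‖(t : ℂ) • v‖ ^ 2 = t ^ 2 * ‖v‖ ^ 2 := by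
    rw [norm_smul]
    simp [Complex.norm_real, mul_pow, sq_abs]
  rw [h1, h2]
  ring

/-- Fixed point property of proximal gradient descent (Theorem 2.1). -/
theorem pgd_fixed_point_property (n m : ℕ)
    (A : EuclideanSpace ℂ (Fin n) →L[ℂ] EuclideanSpace ℂ (Fin m))
    (b : EuclideanSpace ℂ (Fin m))
    (g : EuclideanSpace ℂ (Fin n) → ℝ) (hg : ConvexOn ℝ Set.univ g)
    (xstar : EuclideanSpace ℂ (Fin n)) :
    (∀ x : EuclideanSpace ℂ (Fin n),
      (1/2) * ‖A xstar - b‖^2 + g xstar ≤ (1/2) * ‖A x - b‖^2 + g x) ↔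
    (∀ z : EuclideanSpace ℂ (Fin n),
      (1/2) * ‖xstar - (xstar - (ContinuousLinearMap.adjoint A) (A xstar - b))‖^2
          + g xstar ≤
      (1/2) * ‖z - (xstar - (ContinuousLinearMap.adjoint A) (A xstar - b))‖^2 + g z) := by
  set w : EuclideanSpace ℂ (Fin n) := (ContinuousLinearMap.adjoint A) (A xstar - b) with hw
  have hsimp : xstar - (xstar - w) = w := by abel
  have hadj : ∀ d : EuclideanSpace ℂ (Fin n), (inner ℂ w d : ℂ) = (inner ℂ (A xstar - b) (A d) : ℂ) := by
    intro d
    rw [hw, ContinuousLinearMap.adjoint_inner_left]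
  have hgc : ∀ (d : EuclideanSpace ℂ (Fin n)) (t : ℝ), 0 < t → t ≤ 1 →
      g (xstar + (t : ℂ) • d) ≤ g xstar + t * (g (xstar + d) - g xstar) := by
    intro d t ht0 ht1
    have h := hg.2 (Set.mem_univ xstar) (Set.mem_univ (xstar + d))
      (by linarith : (0:ℝ) ≤ 1 - t) ht0.le (by ring)
    have hsm : (t : ℂ) • d = t • d := (RCLike.real_smul_eq_coe_smul (K := ℂ) t d).symm
    have heq : (1 - t) • xstar + t • (xstar + d) = xstar + (t : ℂ) • d := by
      rw [hsm]; module
    rw [heq] at h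
    simp only [smul_eq_mul] at h
    linarith [h]
  constructor
  · intro H z
    rw [hsimp]
    have hC : ∀ d : EuclideanSpace ℂ (Fin n),
        0 ≤ re ((inner ℂ w d : ℂ)) + g (xstar + d) - g xstar := by
      intro d
      apply pgd_aux _ ((1/2) * ‖A d‖ ^ 2) (by positivity)
      intro t ht0 ht1
      have hx := H (xstar + (t : ℂ) • d)
      have hA : A (xstar + (t : ℂ) • d) - b = (A xstar - b) + (t : ℂ) • A d := by
        rw [map_add, map_smul]
        abel
      rw [hA, pgd_quad_expand] at hx
      have hgt := hgc d t ht0 ht1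
      rw [hadj d]
      nlinarith [hx, hgt]
    have hd := hC (z - xstar)
    have hz : z - (xstar - w) = w + (z - xstar) := by abel
    have hx2 : xstar + (z - xstar) = z := by abel
    rw [hz, norm_add_sq (𝕜 := ℂ)]
    rw [hx2] at hd
    nlinarith [hd]
  · intro H x
    have hC : ∀ d : EuclideanSpace ℂ (Fin n),
        0 ≤ re ((inner ℂ w d : ℂ)) + g (xstar + d) - g xstar := by
      intro d
      apply pgd_aux _ ((1/2) * ‖d‖ ^ 2) (by positivity)
      intro t ht0 ht1
      have hz := H (xstar + (t : ℂ) • d)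
      rw [hsimp] at hz
      have heq : xstar + (t : ℂ) • d - (xstar - w) = w + (t : ℂ) • d := by abel
      rw [heq, pgd_quad_expand] at hz
      have hgt := hgc d t ht0 ht1
      nlinarith [hz, hgt]
    have hd := hC (x - xstar)
    have hA : A x - b = (A xstar - b) + A (x - xstar) := by
      rw [map_sub]
      abel
    have hx2 : xstar + (x - xstar) = x := by abel
    rw [hA, norm_add_sq (𝕜 := ℂ)]
    rw [hx2, hadj] at hd
    nlinarith [hd]
end

section
/- Let E = EuclideanSpace ℂ (Fin n) and F = EuclideanSpace ℂ (Fin m), and let A : E →L[ℂ] F with ‖A‖ ≤ 1, adjoint A† = ContinuousLinearMap.adjoint A, and A injective (equivalently, A† ∘L A has no zero eigenvalue). Then for every e ∈ E with e ≠ 0, ‖e − A†(A e)‖ < ‖e‖; hence the contraction bound ‖(I − A†A)e‖ ≤ ‖e‖ of proximal gradient descent is strict for nonzero error. (Corollary 2.4.) -/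
open ContinuousLinearMap in
/-- Strictness of the PGD contraction bound when `A` is injective (Corollary 2.4). -/
theorem pgd_strict_contraction_of_injective (n m : ℕ)
    (A : EuclideanSpace ℂ (Fin n) →L[ℂ] EuclideanSpace ℂ (Fin m))
    (hA : ‖A‖ ≤ 1) (hinj : Function.Injective A) :
    ∀ e : EuclideanSpace ℂ (Fin n), e ≠ 0 →
      ‖e - (ContinuousLinearMap.adjoint A) (A e)‖ < ‖e‖ := by
  intro e he
  have hAe : A e ≠ 0 := fun h => he (hinj (by simp [h]))
  set y := (ContinuousLinearMap.adjoint A) (A e) with hy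
  have h1 : ‖y‖ ≤ ‖A e‖ := by
    calc ‖y‖ ≤ ‖ContinuousLinearMap.adjoint A‖ * ‖A e‖ :=
          (ContinuousLinearMap.adjoint A).le_opNorm (A e)
      _ ≤ 1 * ‖A e‖ := by
          gcongr
          rw [LinearIsometryEquiv.norm_map]; exact hA
      _ = ‖A e‖ := one_mul _
  have hinner : RCLike.re (inner ℂ e y : ℂ) = ‖A e‖ ^ 2 := by
    rw [hy, ContinuousLinearMap.adjoint_inner_right, inner_self_eq_norm_sq]
  have hsq : ‖e - y‖ ^ 2 < ‖e‖ ^ 2 := by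
    have := @norm_sub_sq ℂ _ _ _ _ e y
    have hpos : (0:ℝ) < ‖A e‖ ^ 2 := by have := norm_pos_iff.mpr hAe; positivity
    nlinarith [norm_nonneg (A e), norm_nonneg y]
  exact lt_of_pow_lt_pow_left₀ 2 (norm_nonneg e) hsq
end
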